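/- arXiv:1703.02809 — 8 statements merged into one kernel-verified Lean document; each statement's English description precedes it below -/
import Mathlib

section
/- Let (𝒞,𝒳,𝒟) be a localization triple in an additive category 𝒜. For any morphism f: A → B in 𝒜 there exists a morphism f̌: Q(A) → Q(B) such that r_B ∘ f̌ = f ∘ r_A. Moreover, if g: A → B satisfies ḡ = f̄ in 𝒜/𝒳 and ǧ: Q(A) → Q(B) satisfies r_B ∘ ǧ = g ∘ r_A, then f̌ − ǧ factors through an object of 𝒳, i.e. the class of f̌ in the stable category is uniquely determined by f̄. -/
open CategoryTheory CategoryTheory.Limits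

universe w' w v u

namespace LiHomotopy

variable {𝒜 : Type u} [Category.{v} 𝒜] [Preadditive 𝒜] [HasZeroObject 𝒜]
  [HasBinaryBiproducts 𝒜]

/-- `f` factors through an object belonging to `X`. -/
def FactorsThruSet (X : Set 𝒜) {A B : 𝒜} (f : A ⟶ B) : Prop :=
  ∃ (M : 𝒜) (_ : M ∈ X) (u : A ⟶ M) (v : M ⟶ B), f = u ≫ v

/-- A localization triple `(C, X, D)` in an additive category `𝒜`, consisting of
full additive subcategories `X ⊆ C ∩ D` together with the chosen approximation
sequences of Definition 3.2. -/
structure LocalizationTriple (C X D : Set 𝒜) where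
  X_sub_C : X ⊆ C
  X_sub_D : X ⊆ D
  C_zero : ∀ Z : 𝒜, IsZero Z → Z ∈ C
  C_sum : ∀ {M N : 𝒜}, M ∈ C → N ∈ C → (M ⊞ N) ∈ C
  X_zero : ∀ Z : 𝒜, IsZero Z → Z ∈ X
  X_sum : ∀ {M N : 𝒜}, M ∈ X → N ∈ X → (M ⊞ N) ∈ X
  D_zero : ∀ Z : 𝒜, IsZero Z → Z ∈ D
  D_sum : ∀ {M N : 𝒜}, M ∈ D → N ∈ D → (M ⊞ N) ∈ D
  /-- the chosen `C`-precover `Q(A) → A` -/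
  Qobj : 𝒜 → 𝒜
  Wl : 𝒜 → 𝒜
  r : ∀ A : 𝒜, Qobj A ⟶ A
  ω : ∀ A : 𝒜, Wl A ⟶ Qobj A
  Qobj_mem : ∀ A : 𝒜, Qobj A ∈ C
  r_precover : ∀ (A C' : 𝒜), C' ∈ C → ∀ g : C' ⟶ A, ∃ h : C' ⟶ Qobj A, h ≫ r A = g
  ω_r : ∀ A : 𝒜, ω A ≫ r A = 0
  ω_weakKernel : ∀ (A T : 𝒜) (g : T ⟶ Qobj A), g ≫ r A = 0 → ∃ h : T ⟶ Wl A, h ≫ ω A = g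
  Wl_perp : ∀ (A C' : 𝒜), C' ∈ C → ∀ g : C' ⟶ Wl A, FactorsThruSet X g
  /-- the chosen `D`-preenvelope `A → R(A)` -/
  Robj : 𝒜 → 𝒜
  Wr : 𝒜 → 𝒜
  j : ∀ A : 𝒜, A ⟶ Robj A
  τ : ∀ A : 𝒜, Robj A ⟶ Wr A
  Robj_mem : ∀ A : 𝒜, Robj A ∈ D
  j_preenvelope : ∀ (A D' : 𝒜), D' ∈ D → ∀ g : A ⟶ D', ∃ h : Robj A ⟶ D', j A ≫ h = g
  j_τ : ∀ A : 𝒜, j A ≫ τ A = 0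
  τ_weakCokernel : ∀ (A T : 𝒜) (g : Robj A ⟶ T), j A ≫ g = 0 → ∃ h : Wr A ⟶ T, τ A ≫ h = g
  Wr_perp : ∀ (A D' : 𝒜), D' ∈ D → ∀ g : Wr A ⟶ D', FactorsThruSet X g
  Qobj_mem_of_D : ∀ A : 𝒜, A ∈ D → Qobj A ∈ C ∩ D
  Robj_mem_of_C : ∀ A : 𝒜, A ∈ C → Robj A ∈ C ∩ D

/-- The class `𝒮` of morphisms `s` such that `R(Q(s̄))` is an isomorphism in the
stable category of `C ∩ D` modulo `X`, expressed via representatives. -/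
def SClass {C X D : Set 𝒜} (L : LocalizationTriple C X D) : MorphismProperty 𝒜 :=
  fun A B s =>
    ∃ (sc : L.Qobj A ⟶ L.Qobj B) (sf : L.Robj (L.Qobj A) ⟶ L.Robj (L.Qobj B)),
      sc ≫ L.r B = L.r A ≫ s ∧
      L.j (L.Qobj A) ≫ sf = sc ≫ L.j (L.Qobj B) ∧
      ∃ g : L.Robj (L.Qobj B) ⟶ L.Robj (L.Qobj A),
        FactorsThruSet X (sf ≫ g - 𝟙 _) ∧ FactorsThruSet X (g ≫ sf - 𝟙 _)

/-!
Two lifts `f̌, ǧ` of stably equal maps `f, g` differ by a map `Q(A) → Q(B)` whose composite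
with `r_B` factors through `X`. Such a map is stably zero: correct it by a lift through `r_B` of
the `X`-factorisation (possible since `X ⊆ C`); what remains is killed by `r_B`, hence factors
through the weak kernel `W_B`, and maps from `C` into `W_B` factor through `X` by hypothesis.
-/

namespace FactorsThruSet

omit [Preadditive 𝒜] [HasZeroObject 𝒜] [HasBinaryBiproducts 𝒜] in
theorem comp_left {X : Set 𝒜} {A' A B : 𝒜} (g : A' ⟶ A) {f : A ⟶ B}
    (hf : FactorsThruSet X f) : FactorsThruSet X (g ≫ f) := by
  obtain ⟨M, hM, u, v, rfl⟩ := hf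
  exact ⟨M, hM, g ≫ u, v, by simp⟩

omit [Preadditive 𝒜] [HasZeroObject 𝒜] [HasBinaryBiproducts 𝒜] in
theorem comp_right {X : Set 𝒜} {A B B' : 𝒜} {f : A ⟶ B} (g : B ⟶ B')
    (hf : FactorsThruSet X f) : FactorsThruSet X (f ≫ g) := by
  obtain ⟨M, hM, u, v, rfl⟩ := hf
  exact ⟨M, hM, u, v ≫ g, by simp⟩

omit [HasZeroObject 𝒜] in
theorem add {X : Set 𝒜} (hX : ∀ {M N : 𝒜}, M ∈ X → N ∈ X → (M ⊞ N) ∈ X)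
    {A B : 𝒜} {f g : A ⟶ B} (hf : FactorsThruSet X f) (hg : FactorsThruSet X g) :
    FactorsThruSet X (f + g) := by
  obtain ⟨M, hM, u, v, rfl⟩ := hf
  obtain ⟨N, hN, u', v', rfl⟩ := hg
  exact ⟨M ⊞ N, hX hM hN, biprod.lift u u', biprod.desc v v', by simp⟩

end FactorsThruSet

namespace LocalizationTriple

variable {C X D : Set 𝒜} (L : LocalizationTriple C X D)

omit [HasZeroObject 𝒜] in
theorem exists_comp_r_eq (A : 𝒜) {B : 𝒜} (f : A ⟶ B) :
    ∃ fc : L.Qobj A ⟶ L.Qobj B, fc ≫ L.r B = L.r A ≫ f :=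
  L.r_precover B (L.Qobj A) (L.Qobj_mem A) (L.r A ≫ f)

omit [HasZeroObject 𝒜] in
theorem factorsThruSet_of_comp_r {C' B : 𝒜} (hC' : C' ∈ C) {φ : C' ⟶ L.Qobj B}
    (hφ : FactorsThruSet X (φ ≫ L.r B)) : FactorsThruSet X φ := by
  obtain ⟨M, hM, u, v, huv⟩ := hφ
  obtain ⟨h, hh⟩ := L.r_precover B M (L.X_sub_C hM) v
  have hker : (φ - u ≫ h) ≫ L.r B = 0 := by
    rw [Preadditive.sub_comp, huv, Category.assoc, hh, sub_self]
  obtain ⟨k, hk⟩ := L.ω_weakKernel B C' _ hker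
  have hφ_eq : φ = u ≫ h + k ≫ L.ω B := by rw [hk, add_sub_cancel]
  rw [hφ_eq]
  exact .add L.X_sum ⟨M, hM, u, h, rfl⟩ ((L.Wl_perp B C' hC' k).comp_right (L.ω B))

end LocalizationTriple

theorem creplacement_exists_and_unique {C X D : Set 𝒜} (L : LocalizationTriple C X D)
    {A B : 𝒜} (f : A ⟶ B) :
    (∃ fc : L.Qobj A ⟶ L.Qobj B, fc ≫ L.r B = L.r A ≫ f) ∧
    (∀ (g : A ⟶ B) (fc gc : L.Qobj A ⟶ L.Qobj B),
      FactorsThruSet X (f - g) →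
      fc ≫ L.r B = L.r A ≫ f → gc ≫ L.r B = L.r A ≫ g →
      FactorsThruSet X (fc - gc)) := by
  refine ⟨L.exists_comp_r_eq A f, fun g fc gc hfg hfc hgc => ?_⟩
  have hcomp : (fc - gc) ≫ L.r B = L.r A ≫ (f - g) := by
    rw [Preadditive.sub_comp, hfc, hgc, Preadditive.comp_sub]
  exact L.factorsThruSet_of_comp_r (L.Qobj_mem A) (hcomp ▸ hfg.comp_left (L.r A))

end LiHomotopy
end

section
/- Let (𝒞,𝒳,𝒟) be a localization triple in an additive category 𝒜. For any morphism f: A → B in 𝒜 there exists a morphism f̂: R(A) → R(B) such that f̂ ∘ j^A = j^B ∘ f. Moreover, if g: A → B satisfies ḡ = f̄ in 𝒜/𝒳 and ĝ: R(A) → R(B) satisfies ĝ ∘ j^A = j^B ∘ g, then f̂ − ĝ factors through an object of 𝒳, i.e. the class of f̂ in the stable category is uniquely determined by f̄. -/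
/-!
Since `j^A` is a `D`-preenvelope, `f̂` exists. For uniqueness, `φ := f̂ - ĝ` is a map into
`R(B) ∈ D` with `j^A ≫ φ = (f - g) ≫ j^B` factoring through `X ⊆ D`, say as `u ≫ v`.
Extending `u` along `j^A` to `u'`, the difference `φ - u' ≫ v` kills `j^A`, so it factors
through the weak cokernel `τ^A`; and every map from `W^A` into `D` factors through `X`.
Hence `φ` is a sum of two maps factoring through `X`, which factors through `X` because
`X` is closed under biproducts.
-/

open CategoryTheory CategoryTheory.Limits

universe w' w v u

namespace LiHomotopy

variable {𝒜 : Type u} [Category.{v} 𝒜] [Preadditive 𝒜] [HasZeroObject 𝒜]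
  [HasBinaryBiproducts 𝒜]

section

omit [HasZeroObject 𝒜]

section FactorsThruSet

variable {X : Set 𝒜} {A B T : 𝒜}

section

omit [Preadditive 𝒜] [HasBinaryBiproducts 𝒜]

theorem FactorsThruSet.comp {f : A ⟶ B} (hf : FactorsThruSet X f) (g : B ⟶ T) :
    FactorsThruSet X (f ≫ g) := by
  obtain ⟨M, hM, u, v, rfl⟩ := hf
  exact ⟨M, hM, u, v ≫ g, by simp⟩

theorem FactorsThruSet.precomp {f : B ⟶ T} (hf : FactorsThruSet X f) (g : A ⟶ B) :
    FactorsThruSet X (g ≫ f) := by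
  obtain ⟨M, hM, u, v, rfl⟩ := hf
  exact ⟨M, hM, g ≫ u, v, by simp⟩

end

theorem FactorsThruSet.add_s1 (hX : ∀ {M N : 𝒜}, M ∈ X → N ∈ X → (M ⊞ N) ∈ X)
    {f g : A ⟶ B} (hf : FactorsThruSet X f) (hg : FactorsThruSet X g) :
    FactorsThruSet X (f + g) := by
  obtain ⟨M, hM, u, v, rfl⟩ := hf
  obtain ⟨N, hN, u', v', rfl⟩ := hg
  exact ⟨M ⊞ N, hX hM hN, biprod.lift u u', biprod.desc v v', by simp⟩

end FactorsThruSet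

namespace LocalizationTriple

variable {C X D : Set 𝒜} (L : LocalizationTriple C X D)

theorem factorsThruSet_of_j_comp {A T : 𝒜} (hT : T ∈ D) {φ : L.Robj A ⟶ T}
    (hφ : FactorsThruSet X (L.j A ≫ φ)) : FactorsThruSet X φ := by
  obtain ⟨M, hM, u, v, huv⟩ := hφ
  obtain ⟨u', rfl⟩ := L.j_preenvelope A M (L.X_sub_D hM) u
  have hkill : L.j A ≫ (φ - u' ≫ v) = 0 := by
    rw [Preadditive.comp_sub, huv, Category.assoc, sub_self]
  obtain ⟨h, hh⟩ := L.τ_weakCokernel A T _ hkill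
  have hsplit : φ = u' ≫ v + L.τ A ≫ h := by
    rw [hh, add_sub_cancel]
  rw [hsplit]
  exact .add L.X_sum ⟨M, hM, u', v, rfl⟩ ((L.Wr_perp A T hT h).precomp (L.τ A))

end LocalizationTriple

end

theorem freplacement_exists_and_unique {C X D : Set 𝒜} (L : LocalizationTriple C X D)
    {A B : 𝒜} (f : A ⟶ B) :
    (∃ fhat : L.Robj A ⟶ L.Robj B, L.j A ≫ fhat = f ≫ L.j B) ∧
    (∀ (g : A ⟶ B) (fhat ghat : L.Robj A ⟶ L.Robj B),
      FactorsThruSet X (f - g) →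
      L.j A ≫ fhat = f ≫ L.j B → L.j A ≫ ghat = g ≫ L.j B →
      FactorsThruSet X (fhat - ghat)) := by
  refine ⟨L.j_preenvelope A (L.Robj B) (L.Robj_mem B) (f ≫ L.j B), ?_⟩
  intro g fhat ghat hfg hf hg
  apply L.factorsThruSet_of_j_comp (L.Robj_mem B)
  rw [Preadditive.comp_sub, hf, hg, ← Preadditive.sub_comp]
  exact hfg.comp (L.j B)

end LiHomotopy
end

section
/- Let (𝒞,𝒳,𝒟) be a localization triple in an additive category 𝒜. The assignment A ↦ Q(A), f̄ ↦ (class of f̌, where r_B ∘ f̌ = f ∘ r_A) defines an additive functor Q: 𝒜/𝒳 → 𝒞/𝒳, and this functor is right adjoint to the functor 𝒞/𝒳 → 𝒜/𝒳 induced by the inclusion 𝒞 ↪ 𝒜. -/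
open CategoryTheory CategoryTheory.Limits

universe w' w v u

namespace LiHomotopy

variable {𝒜 : Type u} [Category.{v} 𝒜] [Preadditive 𝒜] [HasZeroObject 𝒜]
  [HasBinaryBiproducts 𝒜]

open ZeroObject in
/-- The stable relation: `f ≈ g` iff `f - g` factors through an object of `X`. -/
def stableRel (X : Set 𝒜) : HomRel 𝒜 :=
  fun {A B} (f g : A ⟶ B) => FactorsThruSet X (f - g)

/-- The stable category `𝒜/X`. -/
abbrev StableCat (X : Set 𝒜) := CategoryTheory.Quotient (stableRel X)

/-- The canonical quotient functor `𝒜 ⥤ 𝒜/X`. -/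
abbrev stableQuot (X : Set 𝒜) : 𝒜 ⥤ StableCat X :=
  Quotient.functor (stableRel X)

open ZeroObject in
theorem stableRel_congruence (X : Set 𝒜)
    (hX0 : ∀ Z : 𝒜, IsZero Z → Z ∈ X)
    (hXsum : ∀ {M N : 𝒜}, M ∈ X → N ∈ X → (M ⊞ N) ∈ X) :
    Congruence (stableRel X) where
  equivalence := by
    intro A B
    constructor
    · intro f
      exact ⟨(0 : 𝒜), hX0 _ (isZero_zero 𝒜), 0, 0, by simp⟩
    · intro f g h
      obtain ⟨M, hM, u, v, huv⟩ := (h : FactorsThruSet X (f - g))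
      exact ⟨M, hM, -u, v, by rw [Preadditive.neg_comp, ← huv]; abel⟩
    · intro f g h h₁ h₂
      obtain ⟨M, hM, u, v, huv⟩ := (h₁ : FactorsThruSet X (f - g))
      obtain ⟨N, hN, u', v', huv'⟩ := (h₂ : FactorsThruSet X (g - h))
      exact ⟨M ⊞ N, hXsum hM hN, biprod.lift u u', biprod.desc v v', by
        rw [biprod.lift_desc, ← huv, ← huv']; abel⟩
  comp_left := by
    intro A B Z f g g' h
    obtain ⟨M, hM, u, v, huv⟩ := (h : FactorsThruSet X (g - g'))
    exact ⟨M, hM, f ≫ u, v, by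
      show f ≫ g - f ≫ g' = (f ≫ u) ≫ v
      rw [← Preadditive.comp_sub, huv, Category.assoc]⟩
  comp_right := by
    intro A B Z f f' g h
    obtain ⟨M, hM, u, v, huv⟩ := (h : FactorsThruSet X (f - f'))
    exact ⟨M, hM, u, v ≫ g, by
      show f ≫ g - f' ≫ g = u ≫ v ≫ g
      rw [← Preadditive.sub_comp, huv, Category.assoc]⟩

/-- The preadditive structure on the stable category. -/
def stablePreadditive (X : Set 𝒜)
    (hX0 : ∀ Z : 𝒜, IsZero Z → Z ∈ X)
    (hXsum : ∀ {M N : 𝒜}, M ∈ X → N ∈ X → (M ⊞ N) ∈ X) :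
    Preadditive (StableCat X) :=
  letI := stableRel_congruence X hX0 hXsum
  Quotient.preadditive _ (fun A B f₁ f₂ g₁ g₂ h₁ h₂ => by
    obtain ⟨M, hM, u, v, huv⟩ := (h₁ : FactorsThruSet X (f₁ - f₂))
    obtain ⟨N, hN, u', v', huv'⟩ := (h₂ : FactorsThruSet X (g₁ - g₂))
    exact ⟨M ⊞ N, hXsum hM hN, biprod.lift u u', biprod.desc v v', by
      rw [biprod.lift_desc, ← huv, ← huv']; abel⟩)

section Aux


variable {C X D : Set 𝒜} (L : LocalizationTriple C X D)

open ZeroObject in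
lemma factors_zero (hX0 : ∀ Z : 𝒜, IsZero Z → Z ∈ X) {A B : 𝒜} :
    FactorsThruSet X (0 : A ⟶ B) :=
  ⟨(0 : 𝒜), hX0 _ (isZero_zero 𝒜), 0, 0, by simp⟩

lemma factors_add (hXsum : ∀ {M N : 𝒜}, M ∈ X → N ∈ X → (M ⊞ N) ∈ X)
    {A B : 𝒜} {f g : A ⟶ B} (hf : FactorsThruSet X f) (hg : FactorsThruSet X g) :
    FactorsThruSet X (f + g) := by
  obtain ⟨M, hM, u, v, huv⟩ := hf
  obtain ⟨N, hN, u', v', huv'⟩ := hg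
  exact ⟨M ⊞ N, hXsum hM hN, biprod.lift u u', biprod.desc v v', by
    rw [biprod.lift_desc, ← huv, ← huv']⟩

/-- Key cancellation: a morphism from an object of `C` into `Q(B)` which dies
under `r B` factors through `X`. -/
lemma cancel_r {C' B : 𝒜} (hC' : C' ∈ C) (δ : C' ⟶ L.Qobj B)
    (h : δ ≫ L.r B = 0) : FactorsThruSet X δ := by
  obtain ⟨t, ht⟩ := L.ω_weakKernel B C' δ h
  obtain ⟨M, hM, u, v, huv⟩ := L.Wl_perp B C' hC' t
  exact ⟨M, hM, u, v ≫ L.ω B, by rw [← Category.assoc, ← huv, ht]⟩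

lemma rel_of_r_eq {C' B : 𝒜} (hC' : C' ∈ C) {a b : C' ⟶ L.Qobj B}
    (h : (a - b) ≫ L.r B = 0) : stableRel X a b :=
  cancel_r L hC' _ h

/-- Well-definedness of lifts along the precovers. -/
lemma lift_wd {A B : 𝒜} {f f' : A ⟶ B} {fc fc' : L.Qobj A ⟶ L.Qobj B}
    (hfc : fc ≫ L.r B = L.r A ≫ f) (hfc' : fc' ≫ L.r B = L.r A ≫ f')
    (h : FactorsThruSet X (f - f')) : stableRel X fc fc' := by
  obtain ⟨M, hM, u, v, huv⟩ := h
  obtain ⟨hv, hvr⟩ := L.r_precover B M (L.X_sub_C hM) v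
  have h1 : FactorsThruSet X (fc - fc' - L.r A ≫ u ≫ hv) := by
    refine cancel_r L (L.Qobj_mem A) _ ?_
    rw [Preadditive.sub_comp, Preadditive.sub_comp, hfc, hfc',
      Category.assoc, Category.assoc, hvr, ← huv, ← Preadditive.comp_sub,
      ← Preadditive.comp_sub]
    simp
  have h2 : FactorsThruSet X (L.r A ≫ u ≫ hv) :=
    ⟨M, hM, L.r A ≫ u, hv, by rw [Category.assoc]⟩
  have := factors_add L.X_sum h1 h2
  exact (by simpa using this : FactorsThruSet X (fc - fc'))

/-- The chosen lift of a morphism along the `C`-precovers. -/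
noncomputable def qlift {A B : 𝒜} (f : A ⟶ B) : L.Qobj A ⟶ L.Qobj B :=
  (L.r_precover B (L.Qobj A) (L.Qobj_mem A) (L.r A ≫ f)).choose

lemma qlift_spec {A B : 𝒜} (f : A ⟶ B) : qlift L f ≫ L.r B = L.r A ≫ f :=
  (L.r_precover B (L.Qobj A) (L.Qobj_mem A) (L.r A ≫ f)).choose_spec

/-- The chosen section of `r A` when `A ∈ C`. -/
noncomputable def sec {A : 𝒜} (hA : A ∈ C) : A ⟶ L.Qobj A :=
  (L.r_precover A A hA (𝟙 A)).choose

lemma sec_r {A : 𝒜} (hA : A ∈ C) : sec L hA ≫ L.r A = 𝟙 A :=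
  (L.r_precover A A hA (𝟙 A)).choose_spec

/-- The functor `𝒜 ⥤ (C/X)` underlying `Q`. -/
noncomputable def Fpre : 𝒜 ⥤ ObjectProperty.FullSubcategory (fun A : StableCat X => A.as ∈ C) where
  obj A := ⟨⟨L.Qobj A⟩, L.Qobj_mem A⟩
  map {A B} f := ObjectProperty.homMk ((stableQuot X).map (qlift L f))
  map_id A := InducedCategory.hom_ext (CategoryTheory.Quotient.sound _ (lift_wd L (f' := 𝟙 A) (qlift_spec L (𝟙 A))
    (by simp) (by simpa using factors_zero L.X_zero)))
  map_comp {A B C'} f g := InducedCategory.hom_ext (CategoryTheory.Quotient.sound _ (lift_wd L (f' := f ≫ g) (qlift_spec L (f ≫ g))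
    (by rw [Category.assoc, qlift_spec L g, ← Category.assoc, qlift_spec L f,
      Category.assoc])
    (by simpa using factors_zero L.X_zero)))

/-- The induced functor `𝒜/X ⥤ C/X`. -/
noncomputable def Qfun : StableCat X ⥤ ObjectProperty.FullSubcategory (fun A : StableCat X => A.as ∈ C) :=
  CategoryTheory.Quotient.lift _ (Fpre L) (fun _ _ f g h =>
    InducedCategory.hom_ext (CategoryTheory.Quotient.sound _ (lift_wd L (qlift_spec L f) (qlift_spec L g) h)))

end Aux

theorem Qfunctor_exists_additive_rightAdjoint {C X D : Set 𝒜}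
    (L : LocalizationTriple C X D) :
    letI : Preadditive (StableCat X) := stablePreadditive X L.X_zero L.X_sum
    ∃ (Q' : StableCat X ⥤ ObjectProperty.FullSubcategory (fun A : StableCat X => A.as ∈ C))
      (hobj : ∀ A : 𝒜, Q'.obj ⟨A⟩ = ⟨⟨L.Qobj A⟩, L.Qobj_mem A⟩),
      (∀ (A B : 𝒜) (f : A ⟶ B) (fc : L.Qobj A ⟶ L.Qobj B),
        fc ≫ L.r B = L.r A ≫ f →
        (ObjectProperty.ι _).map (Q'.map ((stableQuot X).map f)) =
          eqToHom (congrArg (ObjectProperty.ι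
              (fun A : StableCat X => A.as ∈ C)).obj (hobj A)) ≫
            (stableQuot X).map fc ≫
          eqToHom (congrArg (ObjectProperty.ι
              (fun A : StableCat X => A.as ∈ C)).obj (hobj B)).symm) ∧
      Q'.Additive ∧
      Nonempty (ObjectProperty.ι (fun A : StableCat X => A.as ∈ C) ⊣ Q') := by
  classical
  letI : Preadditive (StableCat X) := stablePreadditive X L.X_zero L.X_sum
  refine ⟨Qfun L, fun A => rfl, ?_, ?_, ?_⟩
  · intro A B f fc hfc
    show (stableQuot X).map (qlift L f) = 𝟙 _ ≫ (stableQuot X).map fc ≫ 𝟙 _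
    rw [Category.id_comp, Category.comp_id]
    exact CategoryTheory.Quotient.sound _ (lift_wd L (f' := f) (qlift_spec L f) hfc
      (by simpa using factors_zero L.X_zero))
  · constructor
    intro P Q u v
    obtain ⟨a, rfl⟩ := (stableQuot X).map_surjective u
    obtain ⟨b, rfl⟩ := (stableQuot X).map_surjective v
    have h1 : (stableQuot X).map a + (stableQuot X).map b
        = (stableQuot X).map (a + b) := rfl
    rw [h1]
    apply InducedCategory.hom_ext
    show (stableQuot X).map (qlift L (a + b)) =
      (stableQuot X).map (qlift L a) + (stableQuot X).map (qlift L b)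
    have h2 : (stableQuot X).map (qlift L a) + (stableQuot X).map (qlift L b)
        = (stableQuot X).map (qlift L a + qlift L b) := rfl
    rw [h2]
    refine CategoryTheory.Quotient.sound _ (lift_wd L (f' := a + b) (qlift_spec L (a + b)) ?_
      (by simpa using factors_zero L.X_zero))
    rw [Preadditive.add_comp, qlift_spec L a, qlift_spec L b, Preadditive.comp_add]
  · refine ⟨{
      unit := { app := fun c => ObjectProperty.homMk ((stableQuot X).map (sec L c.property)), naturality := ?_ }
      counit := { app := fun A => (stableQuot X).map (L.r A.as), naturality := ?_ }
      left_triangle_components := ?_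
      right_triangle_components := ?_ }⟩
    · intro c d h
      obtain ⟨h, rfl⟩ := ObjectProperty.homMk_surjective h
      obtain ⟨g, hg⟩ := (stableQuot X).map_surjective
        h
      have hg' : (stableQuot X).map g = h := hg
      subst hg'
      apply InducedCategory.hom_ext
      show (stableQuot X).map g ≫ (stableQuot X).map (sec L d.property) =
        (stableQuot X).map (sec L c.property) ≫ (stableQuot X).map (qlift L g)
      rw [← Functor.map_comp, ← Functor.map_comp]
      refine CategoryTheory.Quotient.sound _ (rel_of_r_eq L c.property ?_)
      rw [Preadditive.sub_comp, Category.assoc, Category.assoc, qlift_spec L g,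
        sec_r L d.property, ← Category.assoc, sec_r L c.property]
      simp
    · intro A B u
      obtain ⟨f, rfl⟩ := (stableQuot X).map_surjective u
      show (stableQuot X).map (qlift L f) ≫ (stableQuot X).map (L.r B.as) =
        (stableQuot X).map (L.r A.as) ≫ (stableQuot X).map f
      rw [← Functor.map_comp, ← Functor.map_comp, qlift_spec L f]
    · intro c
      show (stableQuot X).map (sec L c.property) ≫ (stableQuot X).map (L.r c.obj.as) =
        (stableQuot X).map (𝟙 c.obj.as)
      rw [← Functor.map_comp, sec_r L c.property]
    · intro A
      apply InducedCategory.hom_ext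
      show (stableQuot X).map (sec L (L.Qobj_mem A.as)) ≫
          (stableQuot X).map (qlift L (L.r A.as)) =
        (stableQuot X).map (𝟙 (L.Qobj A.as))
      rw [← Functor.map_comp]
      refine CategoryTheory.Quotient.sound _ (rel_of_r_eq L (L.Qobj_mem A.as) ?_)
      rw [Preadditive.sub_comp, Category.assoc, qlift_spec L (L.r A.as),
        ← Category.assoc, sec_r L (L.Qobj_mem A.as)]
      simp


end LiHomotopy
end

section
/- Let (𝒞,𝒳,𝒟) be a localization triple in an additive category 𝒜. The assignment A ↦ R(A), f̄ ↦ (class of f̂, where f̂ ∘ j^A = j^B ∘ f) defines an additive functor R: 𝒜/𝒳 → 𝒟/𝒳, and this functor is left adjoint to the functor 𝒟/𝒳 → 𝒜/𝒳 induced by the inclusion 𝒟 ↪ 𝒜. -/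
open CategoryTheory CategoryTheory.Limits

universe w' w v u

namespace LiHomotopy

variable {𝒜 : Type u} [Category.{v} 𝒜] [Preadditive 𝒜] [HasZeroObject 𝒜]
  [HasBinaryBiproducts 𝒜]

section Construction

namespace LocalizationTriple

set_option linter.unusedSectionVars false
open ZeroObject

variable {C X D : Set 𝒜} (L : LocalizationTriple C X D)

lemma FactorsThruSet.add' (hXsum : ∀ {M N : 𝒜}, M ∈ X → N ∈ X → (M ⊞ N) ∈ X)
    {A B : 𝒜} {f g : A ⟶ B} (hf : FactorsThruSet X f) (hg : FactorsThruSet X g) :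
    FactorsThruSet X (f + g) := by
  obtain ⟨M, hM, u, v, huv⟩ := hf
  obtain ⟨N, hN, u', v', huv'⟩ := hg
  exact ⟨M ⊞ N, hXsum hM hN, biprod.lift u u', biprod.desc v v', by
    rw [biprod.lift_desc, huv, huv']⟩

/-- Key lemma: a morphism from `R(A)` to an object of `D` killing `j A` factors through `X`. -/
lemma key {A B : 𝒜} (hB : B ∈ D) (g : L.Robj A ⟶ B) (hg : L.j A ≫ g = 0) :
    FactorsThruSet X g := by
  obtain ⟨h, hh⟩ := L.τ_weakCokernel A B g hg
  obtain ⟨M, hM, u, v, huv⟩ := L.Wr_perp A B hB h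
  exact ⟨M, hM, L.τ A ≫ u, v, by rw [Category.assoc, ← huv, hh]⟩

/-- A chosen lift of `f` along the preenvelopes. -/
noncomputable def hat {A B : 𝒜} (f : A ⟶ B) : L.Robj A ⟶ L.Robj B :=
  (L.j_preenvelope A (L.Robj B) (L.Robj_mem B) (f ≫ L.j B)).choose

lemma j_hat {A B : 𝒜} (f : A ⟶ B) : L.j A ≫ L.hat f = f ≫ L.j B :=
  (L.j_preenvelope A (L.Robj B) (L.Robj_mem B) (f ≫ L.j B)).choose_spec

/-- Descent: lifts of stably equal morphisms are stably equal. -/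
lemma descent {A B : 𝒜} (g₁ g₂ : L.Robj A ⟶ L.Robj B) (f₁ f₂ : A ⟶ B)
    (h1 : L.j A ≫ g₁ = f₁ ≫ L.j B) (h2 : L.j A ≫ g₂ = f₂ ≫ L.j B)
    (hf : FactorsThruSet X (f₁ - f₂)) : FactorsThruSet X (g₁ - g₂) := by
  obtain ⟨M, hM, u, v, huv⟩ := hf
  obtain ⟨uh, huh⟩ := L.j_preenvelope A M (L.X_sub_D hM) u
  have h0 : L.j A ≫ (g₁ - g₂ - uh ≫ v ≫ L.j B) = 0 := by
    rw [Preadditive.comp_sub, Preadditive.comp_sub, h1, h2, ← Preadditive.sub_comp, huv,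
      ← Category.assoc, huh, Category.assoc]
    abel
  have hd := L.key (L.Robj_mem B) _ h0
  have : g₁ - g₂ = (g₁ - g₂ - uh ≫ v ≫ L.j B) + uh ≫ v ≫ L.j B := by abel
  rw [this]
  exact FactorsThruSet.add' L.X_sum hd ⟨M, hM, uh, v ≫ L.j B, rfl⟩

lemma descent0 {A B : 𝒜} (hXzero : ∀ Z : 𝒜, IsZero Z → Z ∈ X)
    (g₁ g₂ : L.Robj A ⟶ L.Robj B) (f : A ⟶ B)
    (h1 : L.j A ≫ g₁ = f ≫ L.j B) (h2 : L.j A ≫ g₂ = f ≫ L.j B) :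
    FactorsThruSet X (g₁ - g₂) :=
  L.descent g₁ g₂ f f h1 h2 ⟨0, hXzero _ (isZero_zero 𝒜), 0, 0, by simp⟩

/-- The functor `𝒜 ⥤ D/X` sending `A` to `R(A)`. -/
noncomputable def Fadj : 𝒜 ⥤ ObjectProperty.FullSubcategory (fun A : StableCat X => A.as ∈ D) where
  obj A := ⟨⟨L.Robj A⟩, L.Robj_mem A⟩
  map {A B} f := ObjectProperty.homMk ((stableQuot X).map (L.hat f))
  map_id A := ObjectProperty.hom_ext _ (CategoryTheory.Quotient.sound _
    (L.descent (L.hat (𝟙 A)) (𝟙 _) (𝟙 A) (𝟙 A) (L.j_hat _) (by simp)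
      ⟨0, L.X_zero _ (isZero_zero 𝒜), 0, 0, by simp⟩))
  map_comp {A B C'} f g := ObjectProperty.hom_ext _ (CategoryTheory.Quotient.sound _
    (L.descent (L.hat (f ≫ g)) (L.hat f ≫ L.hat g) (f ≫ g) (f ≫ g) (L.j_hat _)
      (by rw [← Category.assoc, L.j_hat, Category.assoc, L.j_hat, ← Category.assoc])
      ⟨0, L.X_zero _ (isZero_zero 𝒜), 0, 0, by simp⟩))

/-- The induced functor `𝒜/X ⥤ D/X`. -/
noncomputable def Rfun : StableCat X ⥤ ObjectProperty.FullSubcategory (fun A : StableCat X => A.as ∈ D) :=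
  CategoryTheory.Quotient.lift _ (L.Fadj) (fun A B f g h =>
    ObjectProperty.hom_ext _ (CategoryTheory.Quotient.sound _ (L.descent (L.hat f) (L.hat g) f g (L.j_hat _) (L.j_hat _) h)))

/-- The chosen retraction of `j A` for `A ∈ D`. -/
noncomputable def retr {A : 𝒜} (hA : A ∈ D) : L.Robj A ⟶ A :=
  (L.j_preenvelope A A hA (𝟙 A)).choose

lemma j_retr {A : 𝒜} (hA : A ∈ D) : L.j A ≫ L.retr hA = 𝟙 A :=
  (L.j_preenvelope A A hA (𝟙 A)).choose_spec

/-- The adjunction. -/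
noncomputable def adj : L.Rfun ⊣ ObjectProperty.ι (fun A : StableCat X => A.as ∈ D) where
  unit :=
    { app := fun A => (stableQuot X).map (L.j A.as)
      naturality := by
        rintro A B ⟨f⟩
        show (stableQuot X).map f ≫ (stableQuot X).map (L.j B.as) =
          (stableQuot X).map (L.j A.as) ≫ (stableQuot X).map (L.hat f)
        rw [← Functor.map_comp, ← Functor.map_comp]
        exact congrArg _ (L.j_hat f).symm }
  counit :=
    { app := fun P => ObjectProperty.homMk ((stableQuot X).map (L.retr P.property))
      naturality := by
        rintro P Q ⟨⟨f⟩⟩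
        apply ObjectProperty.hom_ext
        show (stableQuot X).map (L.hat f) ≫ (stableQuot X).map (L.retr Q.property) =
          (stableQuot X).map (L.retr P.property) ≫ (stableQuot X).map f
        rw [← Functor.map_comp, ← Functor.map_comp]
        refine CategoryTheory.Quotient.sound _ (L.key Q.property _ ?_)
        rw [Preadditive.comp_sub, ← Category.assoc, L.j_hat, Category.assoc,
          L.j_retr, ← Category.assoc, L.j_retr]
        simp }
  left_triangle_components := by
    intro A
    apply ObjectProperty.hom_ext
    show (stableQuot X).map (L.hat (L.j A.as)) ≫
        (stableQuot X).map (L.retr (L.Robj_mem A.as)) = (stableQuot X).map (𝟙 _)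
    rw [← Functor.map_comp]
    refine CategoryTheory.Quotient.sound _ (L.key (L.Robj_mem A.as) _ ?_)
    rw [Preadditive.comp_sub, ← Category.assoc, L.j_hat, Category.assoc, L.j_retr]
    simp
  right_triangle_components := by
    intro P
    show (stableQuot X).map (L.j P.obj.as) ≫ (stableQuot X).map (L.retr P.property) =
      (stableQuot X).map (𝟙 _)
    rw [← Functor.map_comp]
    exact congrArg _ (L.j_retr P.property)

end LocalizationTriple

end Construction

theorem Rfunctor_exists_additive_leftAdjoint {C X D : Set 𝒜}
    (L : LocalizationTriple C X D) :
    letI : Preadditive (StableCat X) := stablePreadditive X L.X_zero L.X_sum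
    ∃ (R' : StableCat X ⥤ ObjectProperty.FullSubcategory (fun A : StableCat X => A.as ∈ D))
      (hobj : ∀ A : 𝒜, R'.obj ⟨A⟩ = ⟨⟨L.Robj A⟩, L.Robj_mem A⟩),
      (∀ (A B : 𝒜) (f : A ⟶ B) (fhat : L.Robj A ⟶ L.Robj B),
        L.j A ≫ fhat = f ≫ L.j B →
        (ObjectProperty.ι _).map (R'.map ((stableQuot X).map f)) =
          eqToHom (congrArg (ObjectProperty.ι
              (fun A : StableCat X => A.as ∈ D)).obj (hobj A)) ≫
            (stableQuot X).map fhat ≫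
          eqToHom (congrArg (ObjectProperty.ι
              (fun A : StableCat X => A.as ∈ D)).obj (hobj B)).symm) ∧
      R'.Additive ∧
      Nonempty (R' ⊣ ObjectProperty.ι (fun A : StableCat X => A.as ∈ D)) := by

  refine ⟨L.Rfun, fun A => rfl, ?_, ?_, ⟨L.adj⟩⟩
  · intro A B f fhat hf
    show _ = 𝟙 _ ≫ (stableQuot X).map fhat ≫ 𝟙 _
    rw [Category.comp_id, Category.id_comp]
    show (stableQuot X).map (L.hat f) = (stableQuot X).map fhat
    exact CategoryTheory.Quotient.sound _ (L.descent0 L.X_zero _ _ f (L.j_hat f) hf)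
  · letI : Preadditive (StableCat X) := stablePreadditive X L.X_zero L.X_sum
    refine ⟨@fun P Q f g => ?_⟩
    obtain ⟨f⟩ := f
    obtain ⟨g⟩ := g
    apply ObjectProperty.hom_ext
    show (stableQuot X).map (L.hat (f + g)) = (stableQuot X).map (L.hat f + L.hat g)
    refine CategoryTheory.Quotient.sound _ (L.descent0 L.X_zero _ _ (f + g) (L.j_hat _) ?_)
    rw [Preadditive.comp_add, L.j_hat, L.j_hat, Preadditive.add_comp]

end LiHomotopy
end

section
/- Let (𝒞,𝒳,𝒟) be a localization triple in an additive category 𝒜 and let 𝒮 be the class of morphisms s of 𝒜 such that R(Q(s̄)) is an isomorphism in (𝒞∩𝒟)/𝒳. Let ℬ be any category and F: 𝒜 → ℬ a functor which takes every element of 𝒮 to an isomorphism. If f, g: A → B are morphisms in 𝒜 such that f̄ = ḡ in 𝒜/𝒳 (i.e. f − g factors through an object of 𝒳), then F(f) = F(g). -/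
/-!
Write `f - g = u ≫ v` with `u : A ⟶ M`, `M ∈ X`. The projection `biprod.fst : A ⊞ M ⟶ A` is an
isomorphism in `𝒜/X` (with inverse `biprod.inl`), and `Q` and `R` preserve stable isomorphisms,
since lifts along precovers and preenvelopes of morphisms factoring through `X` again factor
through `X` (weak kernels and cokernels plus the orthogonality of `W_A`, `W^A`). So `biprod.fst`
lies in `𝒮` and `F` inverts it. Its two sections `biprod.lift (𝟙 A) u` and `biprod.inl` are then
identified by `F`, and composing them with `biprod.desc g v` gives `f` and `g`.
-/

open CategoryTheory CategoryTheory.Limits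

universe w' w v u

namespace LiHomotopy

variable {𝒜 : Type u} [Category.{v} 𝒜] [Preadditive 𝒜] [HasZeroObject 𝒜]
  [HasBinaryBiproducts 𝒜]

namespace FactorsThruSet

omit [HasZeroObject 𝒜]

variable {X : Set 𝒜} {A B C' : 𝒜}

omit [Preadditive 𝒜] [HasBinaryBiproducts 𝒜] in
lemma of_comp {M : 𝒜} (hM : M ∈ X) (u : A ⟶ M) (v : M ⟶ B) : FactorsThruSet X (u ≫ v) :=
  ⟨M, hM, u, v, rfl⟩

omit [Preadditive 𝒜] [HasBinaryBiproducts 𝒜] in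
lemma comp_left_s5 (e : A ⟶ B) {f : B ⟶ C'} (h : FactorsThruSet X f) :
    FactorsThruSet X (e ≫ f) := by
  obtain ⟨M, hM, u, v, rfl⟩ := h
  simpa using of_comp hM (e ≫ u) v

omit [Preadditive 𝒜] [HasBinaryBiproducts 𝒜] in
lemma comp_right_s5 {f : A ⟶ B} (e : B ⟶ C') (h : FactorsThruSet X f) :
    FactorsThruSet X (f ≫ e) := by
  obtain ⟨M, hM, u, v, rfl⟩ := h
  simpa using of_comp hM u (v ≫ e)

omit [HasBinaryBiproducts 𝒜] in
lemma neg {f : A ⟶ B} (h : FactorsThruSet X f) : FactorsThruSet X (-f) := by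
  obtain ⟨M, hM, u, v, rfl⟩ := h
  simpa using of_comp hM u (-v)

omit [HasBinaryBiproducts 𝒜] in
lemma zero {M : 𝒜} (hM : M ∈ X) : FactorsThruSet X (0 : A ⟶ B) := by
  simpa using of_comp hM (0 : A ⟶ M) 0

lemma add_s5 (hX : ∀ {M N : 𝒜}, M ∈ X → N ∈ X → (M ⊞ N) ∈ X) {f₁ f₂ : A ⟶ B}
    (h₁ : FactorsThruSet X f₁) (h₂ : FactorsThruSet X f₂) : FactorsThruSet X (f₁ + f₂) := by
  obtain ⟨M, hM, u, v, rfl⟩ := h₁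
  obtain ⟨N, hN, u', v', rfl⟩ := h₂
  simpa using of_comp (hX hM hN) (biprod.lift u u') (biprod.desc v v')

end FactorsThruSet

namespace LocalizationTriple

omit [HasZeroObject 𝒜]

variable {C X D : Set 𝒜} (L : LocalizationTriple C X D)

/-- A morphism `e` covering `x` along the precovers differs from a lift of `x` by a map through
the weak kernel `ω`, and that map factors through `X` because its source `Q(A)` lies in `C`. -/
lemma factorsThruSet_of_comp_r_eq {A B : 𝒜} {e : L.Qobj A ⟶ L.Qobj B} {x : A ⟶ B}
    (hcomm : e ≫ L.r B = L.r A ≫ x) (hx : FactorsThruSet X x) : FactorsThruSet X e := by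
  obtain ⟨M, hM, u, v, rfl⟩ := hx
  obtain ⟨w, hw⟩ := L.r_precover B M (L.X_sub_C hM) v
  have hzero : (e - L.r A ≫ u ≫ w) ≫ L.r B = 0 := by
    simp [Preadditive.sub_comp, hcomm, hw]
  obtain ⟨k, hk⟩ := L.ω_weakKernel B _ _ hzero
  rw [show e = (L.r A ≫ u) ≫ w + k ≫ L.ω B by rw [hk]; simp]
  exact .add L.X_sum (.of_comp hM _ w)
    (.comp_right _ (L.Wl_perp B _ (L.Qobj_mem A) k))

lemma factorsThruSet_of_j_comp_eq {A B : 𝒜} {e : L.Robj A ⟶ L.Robj B} {x : A ⟶ B}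
    (hcomm : L.j A ≫ e = x ≫ L.j B) (hx : FactorsThruSet X x) : FactorsThruSet X e := by
  obtain ⟨M, hM, u, v, rfl⟩ := hx
  obtain ⟨w, hw⟩ := L.j_preenvelope A M (L.X_sub_D hM) u
  have hzero : L.j A ≫ (e - w ≫ v ≫ L.j B) = 0 := by
    simp [Preadditive.comp_sub, hcomm, reassoc_of% hw]
  obtain ⟨k, hk⟩ := L.τ_weakCokernel A _ _ hzero
  rw [show e = w ≫ v ≫ L.j B + L.τ A ≫ k by rw [hk]; simp]
  exact .add L.X_sum (.of_comp hM w _)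
    (.comp_left _ (L.Wr_perp A _ (L.Robj_mem B) k))

lemma sClass_of_stableInverse {A B : 𝒜} (s : A ⟶ B) (t : B ⟶ A)
    (hst : FactorsThruSet X (s ≫ t - 𝟙 A)) (hts : FactorsThruSet X (t ≫ s - 𝟙 B)) :
    SClass L s := by
  obtain ⟨sc, hsc⟩ := L.r_precover B _ (L.Qobj_mem A) (L.r A ≫ s)
  obtain ⟨tc, htc⟩ := L.r_precover A _ (L.Qobj_mem B) (L.r B ≫ t)
  obtain ⟨sf, hsf⟩ := L.j_preenvelope _ _ (L.Robj_mem _) (sc ≫ L.j (L.Qobj B))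
  obtain ⟨tf, htf⟩ := L.j_preenvelope _ _ (L.Robj_mem _) (tc ≫ L.j (L.Qobj A))
  refine ⟨sc, sf, hsc, hsf, tf, ?_, ?_⟩
  · refine L.factorsThruSet_of_j_comp_eq (x := sc ≫ tc - 𝟙 _) ?_
      (L.factorsThruSet_of_comp_r_eq (x := s ≫ t - 𝟙 _) ?_ hst)
    · simp [Preadditive.comp_sub, Preadditive.sub_comp, reassoc_of% hsf, htf]
    · simp [Preadditive.comp_sub, Preadditive.sub_comp, htc, reassoc_of% hsc]
  · refine L.factorsThruSet_of_j_comp_eq (x := tc ≫ sc - 𝟙 _) ?_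
      (L.factorsThruSet_of_comp_r_eq (x := t ≫ s - 𝟙 _) ?_ hts)
    · simp [Preadditive.comp_sub, Preadditive.sub_comp, reassoc_of% htf, hsf]
    · simp [Preadditive.comp_sub, Preadditive.sub_comp, hsc, reassoc_of% htc]

lemma biprod_fst_mem_sClass {A M : 𝒜} (hM : M ∈ X) : SClass L (biprod.fst : A ⊞ M ⟶ A) := by
  refine L.sClass_of_stableInverse _ biprod.inl ?_ (by simpa using .zero hM)
  rw [show biprod.fst ≫ biprod.inl - 𝟙 (A ⊞ M) = -(biprod.snd ≫ biprod.inr) by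
    rw [← biprod.total]; abel]
  exact .neg (.of_comp hM _ _)

end LocalizationTriple

theorem map_eq_of_inverts_SClass {C X D : Set 𝒜} (L : LocalizationTriple C X D)
    {ℬ : Type w} [Category.{w'} ℬ] (F : 𝒜 ⥤ ℬ)
    (hF : ∀ ⦃A B : 𝒜⦄ (s : A ⟶ B), SClass L s → IsIso (F.map s))
    {A B : 𝒜} (f g : A ⟶ B) (h : FactorsThruSet X (f - g)) :
    F.map f = F.map g := by
  obtain ⟨M, hM, u, v, huv⟩ := h
  have := hF _ (L.biprod_fst_mem_sClass (A := A) hM)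
  have hsection : F.map (biprod.lift (𝟙 A) u) = F.map biprod.inl :=
    (cancel_mono (F.map biprod.fst)).mp (by simp [← F.map_comp])
  have hf : biprod.lift (𝟙 A) u ≫ biprod.desc g v = f := by
    rw [biprod.lift_desc, Category.id_comp, ← huv, add_sub_cancel]
  rw [← hf, F.map_comp, hsection, ← F.map_comp, biprod.inl_desc]

end LiHomotopy
end

section
/- Let (𝒞,𝒳,𝒟) be a localization triple in an additive category 𝒜 and let 𝒮 be the class of morphisms s of 𝒜 such that R(Q(s̄)) is an isomorphism in (𝒞∩𝒟)/𝒳. Then the localization of 𝒜 with respect to 𝒮 exists. Concretely, the functor L: 𝒜 → (𝒞∩𝒟)/𝒳 given on objects by L(A) = R(Q(A)) and on morphisms by L(f) = R(Q(f̄)) sends every element of 𝒮 to an isomorphism and is a localization functor for 𝒮: every functor F: 𝒜 → ℬ sending elements of 𝒮 to isomorphisms factors through L, uniquely up to the universal property of localization (in Lean terms, L satisfies Functor.IsLocalization for the morphism property 𝒮). -/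
open CategoryTheory CategoryTheory.Limits

universe w' w v u

namespace LiHomotopy

variable {𝒜 : Type u} [Category.{v} 𝒜] [Preadditive 𝒜] [HasZeroObject 𝒜]
  [HasBinaryBiproducts 𝒜]

section Aux

set_option linter.unusedSectionVars false

open ZeroObject

variable {C X D : Set 𝒜}

lemma factors_of_eq {A B : 𝒜} {f g : A ⟶ B} (h : f = g) (hf : FactorsThruSet X f) :
    FactorsThruSet X g := h ▸ hf

/-- `f` is a stable isomorphism modulo `X`. -/
def SIso (X : Set 𝒜) {A B : 𝒜} (f : A ⟶ B) : Prop :=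
  ∃ g : B ⟶ A, FactorsThruSet X (f ≫ g - 𝟙 A) ∧ FactorsThruSet X (g ≫ f - 𝟙 B)

namespace LocalizationTriple

variable (L : LocalizationTriple C X D)

include L

lemma factors_zero {A B : 𝒜} : FactorsThruSet X (0 : A ⟶ B) :=
  ⟨0, L.X_zero _ (isZero_zero 𝒜), 0, 0, by simp⟩

lemma factors_add {A B : 𝒜} {f g : A ⟶ B} (hf : FactorsThruSet X f)
    (hg : FactorsThruSet X g) : FactorsThruSet X (f + g) := by
  obtain ⟨M, hM, u, v, rfl⟩ := hf
  obtain ⟨N, hN, u', v', rfl⟩ := hg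
  exact ⟨M ⊞ N, L.X_sum hM hN, biprod.lift u u', biprod.desc v v',
    by rw [biprod.lift_desc]⟩

lemma factors_comp_left {A B B' : 𝒜} (e : A ⟶ B) {f : B ⟶ B'}
    (hf : FactorsThruSet X f) : FactorsThruSet X (e ≫ f) := by
  obtain ⟨M, hM, u, v, rfl⟩ := hf
  exact ⟨M, hM, e ≫ u, v, by rw [Category.assoc]⟩

lemma factors_comp_right {A B B' : 𝒜} {f : A ⟶ B} (e : B ⟶ B')
    (hf : FactorsThruSet X f) : FactorsThruSet X (f ≫ e) := by
  obtain ⟨M, hM, u, v, rfl⟩ := hf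
  exact ⟨M, hM, u, v ≫ e, by rw [Category.assoc]⟩

lemma siso_id (A : 𝒜) : SIso X (𝟙 A) :=
  ⟨𝟙 A, by simpa using L.factors_zero, by simpa using L.factors_zero⟩

lemma siso_comp {A B B' : 𝒜} {f : A ⟶ B} {g : B ⟶ B'} (hf : SIso X f)
    (hg : SIso X g) : SIso X (f ≫ g) := by
  obtain ⟨f', hf1, hf2⟩ := hf
  obtain ⟨g', hg1, hg2⟩ := hg
  refine ⟨g' ≫ f', ?_, ?_⟩
  · refine factors_of_eq (f := f ≫ (g ≫ g' - 𝟙 B) ≫ f' + (f ≫ f' - 𝟙 A)) ?_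
      (L.factors_add (L.factors_comp_left _ (L.factors_comp_right _ hg1)) hf1)
    simp only [Preadditive.comp_sub, Preadditive.sub_comp, Category.id_comp,
      Category.comp_id, Category.assoc]
    abel
  · refine factors_of_eq (f := g' ≫ (f' ≫ f - 𝟙 B) ≫ g + (g' ≫ g - 𝟙 B')) ?_
      (L.factors_add (L.factors_comp_left _ (L.factors_comp_right _ hf2)) hg2)
    simp only [Preadditive.comp_sub, Preadditive.sub_comp, Category.id_comp,
      Category.comp_id, Category.assoc]
    abel

lemma siso_of_factors_sub {A B : 𝒜} {f f' : A ⟶ B}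
    (h : FactorsThruSet X (f' - f)) (hf : SIso X f) : SIso X f' := by
  obtain ⟨g, h1, h2⟩ := hf
  refine ⟨g, ?_, ?_⟩
  · refine factors_of_eq (f := (f' - f) ≫ g + (f ≫ g - 𝟙 A)) ?_
      (L.factors_add (L.factors_comp_right _ h) h1)
    simp only [Preadditive.sub_comp]; abel
  · refine factors_of_eq (f := g ≫ (f' - f) + (g ≫ f - 𝟙 B)) ?_
      (L.factors_add (L.factors_comp_left _ h) h2)
    simp only [Preadditive.comp_sub]; abel

lemma factors_of_comp_r_zero {A T : 𝒜} (hT : T ∈ C) {g : T ⟶ L.Qobj A}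
    (h : g ≫ L.r A = 0) : FactorsThruSet X g := by
  obtain ⟨h', hh'⟩ := L.ω_weakKernel A T g h
  exact factors_of_eq hh' (L.factors_comp_right _ (L.Wl_perp A T hT h'))

lemma factors_of_j_comp_zero {A T : 𝒜} (hT : T ∈ D) {g : L.Robj A ⟶ T}
    (h : L.j A ≫ g = 0) : FactorsThruSet X g := by
  obtain ⟨h', hh'⟩ := L.τ_weakCokernel A T g h
  exact factors_of_eq hh' (L.factors_comp_left _ (L.Wr_perp A T hT h'))

lemma siso_section {A : 𝒜} (hA : A ∈ C) {t : A ⟶ L.Qobj A}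
    (ht : t ≫ L.r A = 𝟙 A) : SIso X t := by
  refine ⟨L.r A, by simpa [ht] using L.factors_zero, ?_⟩
  refine L.factors_of_comp_r_zero (L.Qobj_mem A) ?_
  rw [Preadditive.sub_comp, Category.assoc, ht, Category.comp_id, Category.id_comp,
    sub_self]

lemma siso_r {A : 𝒜} (hA : A ∈ C) : SIso X (L.r A) := by
  obtain ⟨t, ht⟩ := L.r_precover A A hA (𝟙 A)
  refine ⟨t, ?_, by simpa [ht] using L.factors_zero⟩
  refine L.factors_of_comp_r_zero (L.Qobj_mem A) ?_
  rw [Preadditive.sub_comp, Category.assoc, ht, Category.comp_id, Category.id_comp,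
    sub_self]

lemma siso_retraction {A : 𝒜} (hA : A ∈ D) {t : L.Robj A ⟶ A}
    (ht : L.j A ≫ t = 𝟙 A) : SIso X t := by
  refine ⟨L.j A, ?_, by simpa [ht] using L.factors_zero⟩
  refine L.factors_of_j_comp_zero (L.Robj_mem A) ?_
  rw [Preadditive.comp_sub, ← Category.assoc, ht, Category.id_comp, Category.comp_id,
    sub_self]

lemma siso_j {A : 𝒜} (hA : A ∈ D) : SIso X (L.j A) := by
  obtain ⟨t, ht⟩ := L.j_preenvelope A A hA (𝟙 A)
  refine ⟨t, by simpa [ht] using L.factors_zero, ?_⟩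
  refine L.factors_of_j_comp_zero (L.Robj_mem A) ?_
  rw [Preadditive.comp_sub, ← Category.assoc, ht, Category.id_comp, Category.comp_id,
    sub_self]

lemma factors_Q {A B : 𝒜} {f₁ f₂ : A ⟶ B} {c₁ c₂ : L.Qobj A ⟶ L.Qobj B}
    (h₁ : c₁ ≫ L.r B = L.r A ≫ f₁) (h₂ : c₂ ≫ L.r B = L.r A ≫ f₂)
    (h : FactorsThruSet X (f₁ - f₂)) : FactorsThruSet X (c₁ - c₂) := by
  obtain ⟨M, hM, u, v, huv⟩ := h
  obtain ⟨w, hw⟩ := L.r_precover B M (L.X_sub_C hM) v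
  have h0 : (c₁ - c₂ - L.r A ≫ u ≫ w) ≫ L.r B = 0 := by
    rw [Preadditive.sub_comp, Preadditive.sub_comp, h₁, h₂, Category.assoc,
      Category.assoc, hw, ← Preadditive.comp_sub, ← huv, ← Preadditive.comp_sub,
      sub_self, Limits.comp_zero]
  have h1 : FactorsThruSet X (c₁ - c₂ - L.r A ≫ u ≫ w) :=
    L.factors_of_comp_r_zero (L.Qobj_mem A) h0
  have h2 : FactorsThruSet X (L.r A ≫ u ≫ w) :=
    L.factors_comp_left _ ⟨M, hM, u, w, rfl⟩
  exact factors_of_eq (f := c₁ - c₂ - L.r A ≫ u ≫ w + L.r A ≫ u ≫ w) (by abel)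
    (L.factors_add h1 h2)

lemma factors_R {A B : 𝒜} {c₁ c₂ : A ⟶ B} {g₁ g₂ : L.Robj A ⟶ L.Robj B}
    (h₁ : L.j A ≫ g₁ = c₁ ≫ L.j B) (h₂ : L.j A ≫ g₂ = c₂ ≫ L.j B)
    (h : FactorsThruSet X (c₁ - c₂)) : FactorsThruSet X (g₁ - g₂) := by
  obtain ⟨M, hM, u, v, huv⟩ := h
  obtain ⟨w, hw⟩ := L.j_preenvelope A M (L.X_sub_D hM) u
  have h0 : L.j A ≫ (g₁ - g₂ - w ≫ v ≫ L.j B) = 0 := by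
    rw [Preadditive.comp_sub, Preadditive.comp_sub, h₁, h₂, ← Category.assoc, hw,
      ← Preadditive.sub_comp, huv, Category.assoc, sub_self]
  have h1 : FactorsThruSet X (g₁ - g₂ - w ≫ v ≫ L.j B) :=
    L.factors_of_j_comp_zero (L.Robj_mem B) h0
  have h2 : FactorsThruSet X (w ≫ v ≫ L.j B) := ⟨M, hM, w, v ≫ L.j B, rfl⟩
  exact factors_of_eq (f := g₁ - g₂ - w ≫ v ≫ L.j B + w ≫ v ≫ L.j B) (by abel)
    (L.factors_add h1 h2)

lemma siso_Rlift {A B : 𝒜} {c : A ⟶ B} {c' : L.Robj A ⟶ L.Robj B}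
    (h : L.j A ≫ c' = c ≫ L.j B) (hc : SIso X c) : SIso X c' := by
  obtain ⟨d, hd1, hd2⟩ := hc
  obtain ⟨d', hd'⟩ := L.j_preenvelope B (L.Robj A) (L.Robj_mem A) (d ≫ L.j A)
  refine ⟨d', ?_, ?_⟩
  · refine L.factors_R (c₁ := c ≫ d) (c₂ := 𝟙 A) ?_ (by simp) hd1
    rw [← Category.assoc, h, Category.assoc, hd', ← Category.assoc]
  · refine L.factors_R (c₁ := d ≫ c) (c₂ := 𝟙 B) ?_ (by simp) hd2
    rw [← Category.assoc, hd', Category.assoc, h, ← Category.assoc]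

/-- A chosen lift of `f` along the `C`-precovers. -/
noncomputable def Qc {A B : 𝒜} (f : A ⟶ B) : L.Qobj A ⟶ L.Qobj B :=
  (L.r_precover B _ (L.Qobj_mem A) (L.r A ≫ f)).choose

lemma Qc_spec {A B : 𝒜} (f : A ⟶ B) : L.Qc f ≫ L.r B = L.r A ≫ f :=
  (L.r_precover B _ (L.Qobj_mem A) (L.r A ≫ f)).choose_spec

/-- A chosen extension of `c` along the `D`-preenvelopes. -/
noncomputable def Rmap {A B : 𝒜} (c : A ⟶ B) : L.Robj A ⟶ L.Robj B :=
  (L.j_preenvelope A _ (L.Robj_mem B) (c ≫ L.j B)).choose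

lemma Rmap_spec {A B : 𝒜} (c : A ⟶ B) : L.j A ≫ L.Rmap c = c ≫ L.j B :=
  (L.j_preenvelope A _ (L.Robj_mem B) (c ≫ L.j B)).choose_spec

/-- The chosen representative of `R(Q(f))`. -/
noncomputable def RQ {A B : 𝒜} (f : A ⟶ B) :
    L.Robj (L.Qobj A) ⟶ L.Robj (L.Qobj B) := L.Rmap (L.Qc f)

lemma RQ_spec {A B : 𝒜} (f : A ⟶ B) :
    L.j (L.Qobj A) ≫ L.RQ f = L.Qc f ≫ L.j (L.Qobj B) := L.Rmap_spec _

lemma factors_lift_sub {A B : 𝒜} {f₁ f₂ : A ⟶ B} {c₁ c₂ : L.Qobj A ⟶ L.Qobj B}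
    {g₁ g₂ : L.Robj (L.Qobj A) ⟶ L.Robj (L.Qobj B)}
    (hc₁ : c₁ ≫ L.r B = L.r A ≫ f₁) (hc₂ : c₂ ≫ L.r B = L.r A ≫ f₂)
    (hg₁ : L.j (L.Qobj A) ≫ g₁ = c₁ ≫ L.j (L.Qobj B))
    (hg₂ : L.j (L.Qobj A) ≫ g₂ = c₂ ≫ L.j (L.Qobj B))
    (h : FactorsThruSet X (f₁ - f₂)) : FactorsThruSet X (g₁ - g₂) :=
  L.factors_R hg₁ hg₂ (L.factors_Q hc₁ hc₂ h)

lemma factors_RQ_sub_of_lift {A B : 𝒜} {f : A ⟶ B} {c : L.Qobj A ⟶ L.Qobj B}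
    {f' : L.Robj (L.Qobj A) ⟶ L.Robj (L.Qobj B)}
    (hc : c ≫ L.r B = L.r A ≫ f)
    (hf' : L.j (L.Qobj A) ≫ f' = c ≫ L.j (L.Qobj B)) :
    FactorsThruSet X (L.RQ f - f') :=
  L.factors_lift_sub (L.Qc_spec f) hc (L.RQ_spec f) hf'
    (by simpa using L.factors_zero)

lemma RQ_congr {A B : 𝒜} {f₁ f₂ : A ⟶ B} (h : FactorsThruSet X (f₁ - f₂)) :
    FactorsThruSet X (L.RQ f₁ - L.RQ f₂) :=
  L.factors_lift_sub (L.Qc_spec f₁) (L.Qc_spec f₂) (L.RQ_spec f₁) (L.RQ_spec f₂) h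

lemma RQ_comp {A B B' : 𝒜} (f : A ⟶ B) (g : B ⟶ B') :
    FactorsThruSet X (L.RQ (f ≫ g) - L.RQ f ≫ L.RQ g) := by
  refine L.factors_RQ_sub_of_lift (c := L.Qc f ≫ L.Qc g) ?_ ?_
  · rw [Category.assoc, L.Qc_spec, ← Category.assoc, L.Qc_spec, Category.assoc]
  · rw [← Category.assoc, L.RQ_spec, Category.assoc, L.RQ_spec, ← Category.assoc]

lemma RQ_id (A : 𝒜) : FactorsThruSet X (L.RQ (𝟙 A) - 𝟙 (L.Robj (L.Qobj A))) :=
  L.factors_RQ_sub_of_lift (c := 𝟙 _) (by simp) (by simp)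

lemma siso_RQ {A B : 𝒜} {s : A ⟶ B} (hs : SIso X s) : SIso X (L.RQ s) := by
  obtain ⟨t, h1, h2⟩ := hs
  refine ⟨L.RQ t, ?_, ?_⟩
  · refine L.factors_lift_sub (f₁ := s ≫ t) (f₂ := 𝟙 A)
      (c₁ := L.Qc s ≫ L.Qc t) (c₂ := 𝟙 _) ?_ (by simp) ?_ (by simp) h1
    · rw [Category.assoc, L.Qc_spec, ← Category.assoc, L.Qc_spec, Category.assoc]
    · rw [← Category.assoc, L.RQ_spec, Category.assoc, L.RQ_spec, ← Category.assoc]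
  · refine L.factors_lift_sub (f₁ := t ≫ s) (f₂ := 𝟙 B)
      (c₁ := L.Qc t ≫ L.Qc s) (c₂ := 𝟙 _) ?_ (by simp) ?_ (by simp) h2
    · rw [Category.assoc, L.Qc_spec, ← Category.assoc, L.Qc_spec, Category.assoc]
    · rw [← Category.assoc, L.RQ_spec, Category.assoc, L.RQ_spec, ← Category.assoc]

lemma sclass_iff {A B : 𝒜} {s : A ⟶ B} : SClass L s ↔ SIso X (L.RQ s) := by
  constructor
  · rintro ⟨sc, sf, hsc, hsf, g, hg1, hg2⟩
    exact L.siso_of_factors_sub (L.factors_RQ_sub_of_lift hsc hsf) ⟨g, hg1, hg2⟩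
  · rintro ⟨g, h1, h2⟩
    exact ⟨L.Qc s, L.RQ s, L.Qc_spec s, L.RQ_spec s, g, h1, h2⟩

lemma sclass_of_siso {A B : 𝒜} {s : A ⟶ B} (h : SIso X s) : SClass L s :=
  L.sclass_iff.2 (L.siso_RQ h)

lemma r_mem_sclass (A : 𝒜) : SClass L (L.r A) := by
  refine L.sclass_iff.2 (L.siso_Rlift (L.RQ_spec _) ?_)
  refine L.siso_of_factors_sub (f := L.r (L.Qobj A)) ?_ (L.siso_r (L.Qobj_mem A))
  exact L.factors_Q (L.Qc_spec _) rfl (by simpa using L.factors_zero)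

lemma j_mem_sclass {A : 𝒜} (hA : A ∈ C) : SClass L (L.j A) := by
  refine L.sclass_iff.2 ?_
  have hRA_C : L.Robj A ∈ C := (L.Robj_mem_of_C A hA).1
  obtain ⟨t, ht⟩ := L.r_precover (L.Robj A) (L.Robj A) hRA_C (𝟙 (L.Robj A))
  have h0 : (L.Qc (L.j A) - (L.r A ≫ L.j A) ≫ t) ≫ L.r (L.Robj A) = 0 := by
    rw [Preadditive.sub_comp, L.Qc_spec, Category.assoc, ht, Category.comp_id,
      sub_self]
  have hfac : FactorsThruSet X (L.Qc (L.j A) - (L.r A ≫ L.j A) ≫ t) :=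
    L.factors_of_comp_r_zero (L.Qobj_mem A) h0
  have hα : SIso X (L.Rmap (L.r A)) := L.siso_Rlift (L.Rmap_spec _) (L.siso_r hA)
  have hβ : SIso X (L.Rmap (L.j A)) := by
    refine L.siso_of_factors_sub (f := L.j (L.Robj A)) ?_ (L.siso_j (L.Robj_mem A))
    exact L.factors_R (L.Rmap_spec _) rfl (by simpa using L.factors_zero)
  have hγ : SIso X (L.Rmap t) := L.siso_Rlift (L.Rmap_spec _) (L.siso_section hRA_C ht)
  refine L.siso_of_factors_sub ?_ (L.siso_comp hα (L.siso_comp hβ hγ))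
  refine L.factors_R (L.RQ_spec _) ?_ hfac
  have e1 := L.Rmap_spec (L.r A)
  have e2 := L.Rmap_spec (L.j A)
  have e3 := L.Rmap_spec t
  calc L.j _ ≫ L.Rmap (L.r A) ≫ L.Rmap (L.j A) ≫ L.Rmap t
      = (L.j _ ≫ L.Rmap (L.r A)) ≫ L.Rmap (L.j A) ≫ L.Rmap t := by
        simp only [Category.assoc]
    _ = L.r A ≫ (L.j A ≫ L.Rmap (L.j A)) ≫ L.Rmap t := by
        rw [e1]; simp only [Category.assoc]
    _ = L.r A ≫ L.j A ≫ L.j (L.Robj A) ≫ L.Rmap t := by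
        rw [e2]; simp only [Category.assoc]
    _ = L.r A ≫ L.j A ≫ t ≫ L.j _ := by rw [e3]
    _ = ((L.r A ≫ L.j A) ≫ t) ≫ L.j _ := by simp only [Category.assoc]

lemma fst_mem_sclass (A : 𝒜) {M : 𝒜} (hM : M ∈ X) :
    SClass L (biprod.fst : A ⊞ M ⟶ A) := by
  refine L.sclass_of_siso ⟨biprod.inl, ?_, by simpa using L.factors_zero⟩
  exact ⟨M, hM, -(biprod.snd), biprod.inr, by
    rw [Preadditive.neg_comp, ← biprod.total]; abel⟩

lemma map_eq_of_inverts {E : Type w} [Category.{w'} E] {G : 𝒜 ⥤ E}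
    (hG : (SClass L).IsInvertedBy G) {A B : 𝒜} {f g : A ⟶ B}
    (h : FactorsThruSet X (f - g)) : G.map f = G.map g := by
  obtain ⟨M, hM, u, v, huv⟩ := h
  have hp : IsIso (G.map (biprod.fst : A ⊞ M ⟶ A)) := hG _ (L.fst_mem_sclass A hM)
  have hk : G.map (biprod.inl : A ⟶ A ⊞ M) = G.map (biprod.lift (𝟙 A) u) := by
    have e1 : G.map ((biprod.inl : A ⟶ A ⊞ M) ≫ biprod.fst) =
        G.map (biprod.lift (𝟙 A) u ≫ biprod.fst) := by
      rw [biprod.inl_fst, biprod.lift_fst]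
    rw [G.map_comp, G.map_comp] at e1
    exact (cancel_mono (G.map (biprod.fst : A ⊞ M ⟶ A))).1 e1
  have e2 : f = biprod.lift (𝟙 A) u ≫ biprod.desc g v := by
    rw [biprod.lift_desc, Category.id_comp, ← huv]; abel
  calc G.map f = G.map (biprod.lift (𝟙 A) u) ≫ G.map (biprod.desc g v) := by
        rw [← G.map_comp, ← e2]
    _ = G.map (biprod.inl) ≫ G.map (biprod.desc g v) := by rw [hk]
    _ = G.map g := by rw [← G.map_comp, biprod.inl_desc]

lemma factors_of_compClosure {A B : 𝒜} {f g : A ⟶ B}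
    (h : HomRel.CompClosure (stableRel X) f g) : FactorsThruSet X (f - g) := by
  obtain @⟨s', t', _, _, a, m₁, m₂, b, hr⟩ := h
  have hm : FactorsThruSet _ (m₁ - m₂) := hr
  refine factors_of_eq (f := a ≫ (m₁ - m₂) ≫ b) ?_
    (L.factors_comp_left a (L.factors_comp_right b hm))
  simp only [Preadditive.sub_comp, Preadditive.comp_sub]

end LocalizationTriple

end Aux
section Main

set_option linter.unusedSectionVars false

open ZeroObject

variable {C X D : Set 𝒜}

namespace LocalizationTriple

variable (L : LocalizationTriple C X D)

/-- The localization functor `A ↦ R(Q(A))` into `(𝒞∩𝒟)/𝒳`. -/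
noncomputable def Ffun :
    𝒜 ⥤ ObjectProperty.FullSubcategory (fun A : StableCat X => A.as ∈ C ∩ D) where
  obj A := ⟨⟨L.Robj (L.Qobj A)⟩, L.Robj_mem_of_C _ (L.Qobj_mem A)⟩
  map {A B} f := ObjectProperty.homMk ((stableQuot X).map (L.RQ f))
  map_id A := by
    haveI := stableRel_congruence X L.X_zero L.X_sum
    have : (stableQuot X).map (L.RQ (𝟙 A)) =
        (stableQuot X).map (𝟙 (L.Robj (L.Qobj A))) :=
      (Quotient.functor_map_eq_iff (stableRel X) _ _).2 (L.RQ_id A)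
    ext1
    show (stableQuot X).map (L.RQ (𝟙 A)) = 𝟙 _
    rw [this]
    exact (stableQuot X).map_id _
  map_comp {A B B'} f g := by
    haveI := stableRel_congruence X L.X_zero L.X_sum
    have : (stableQuot X).map (L.RQ (f ≫ g)) =
        (stableQuot X).map (L.RQ f ≫ L.RQ g) :=
      (Quotient.functor_map_eq_iff (stableRel X) _ _).2 (L.RQ_comp f g)
    ext1
    show (stableQuot X).map (L.RQ (f ≫ g)) = (stableQuot X).map (L.RQ f) ≫ (stableQuot X).map (L.RQ g)
    rw [this]
    exact (stableQuot X).map_comp _ _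

lemma Ffun_obj (A : 𝒜) :
    L.Ffun.obj A = ⟨⟨L.Robj (L.Qobj A)⟩, L.Robj_mem_of_C _ (L.Qobj_mem A)⟩ := rfl

lemma Ffun_map {A B : 𝒜} (f : A ⟶ B) :
    (ObjectProperty.ι _).map (L.Ffun.map f) = (stableQuot X).map (L.RQ f) :=
  rfl

/-- An isomorphism in the subcategory of the stable category induced by a
stable isomorphism. -/
noncomputable def sisoTIso {P P' : ObjectProperty.FullSubcategory (fun A : StableCat X => A.as ∈ C ∩ D)}
    (f : P.obj.as ⟶ P'.obj.as) (hf : SIso X f) : P ≅ P' where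
  hom := ObjectProperty.homMk ((stableQuot X).map f)
  inv := ObjectProperty.homMk ((stableQuot X).map hf.choose)
  hom_inv_id := by
    haveI := stableRel_congruence X L.X_zero L.X_sum
    have : (stableQuot X).map (f ≫ hf.choose) =
        (stableQuot X).map (𝟙 P.obj.as) :=
      (Quotient.functor_map_eq_iff (stableRel X) _ _).2 hf.choose_spec.1
    ext1
    show (stableQuot X).map f ≫ (stableQuot X).map hf.choose = 𝟙 P.obj
    rw [← (stableQuot X).map_comp, this]
    exact (stableQuot X).map_id _
  inv_hom_id := by
    haveI := stableRel_congruence X L.X_zero L.X_sum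
    have : (stableQuot X).map (hf.choose ≫ f) =
        (stableQuot X).map (𝟙 P'.obj.as) :=
      (Quotient.functor_map_eq_iff (stableRel X) _ _).2 hf.choose_spec.2
    ext1
    show (stableQuot X).map hf.choose ≫ (stableQuot X).map f = 𝟙 P'.obj
    rw [← (stableQuot X).map_comp, this]
    exact (stableQuot X).map_id _

lemma sisoTIso_hom {P P' : ObjectProperty.FullSubcategory (fun A : StableCat X => A.as ∈ C ∩ D)}
    (f : P.obj.as ⟶ P'.obj.as) (hf : SIso X f) :
    (L.sisoTIso f hf).hom = ObjectProperty.homMk ((stableQuot X).map f) := rfl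

lemma isIso_Ffun_map {A B : 𝒜} {s : A ⟶ B} (hs : SClass L s) :
    IsIso (L.Ffun.map s) := by
  have h : SIso X (L.RQ s) := L.sclass_iff.1 hs
  refine ⟨(L.sisoTIso (P := L.Ffun.obj A) (P' := L.Ffun.obj B) (L.RQ s) h).inv, ?_, ?_⟩
  · exact (L.sisoTIso (P := L.Ffun.obj A) (P' := L.Ffun.obj B) (L.RQ s) h).hom_inv_id
  · exact (L.sisoTIso (P := L.Ffun.obj A) (P' := L.Ffun.obj B) (L.RQ s) h).inv_hom_id

lemma Ffun_inverts : (SClass L).IsInvertedBy L.Ffun :=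
  fun _ _ _ hs => L.isIso_Ffun_map hs

/-- The inverse-direction functor from `(𝒞∩𝒟)/𝒳` to the localized category. -/
noncomputable def Psi :
    ObjectProperty.FullSubcategory (fun A : StableCat X => A.as ∈ C ∩ D) ⥤ (SClass L).Localization where
  obj P := (SClass L).Q.obj P.obj.as
  map {P P'} φ := Quot.liftOn φ.hom (fun f => (SClass L).Q.map f)
    (fun f g h => L.map_eq_of_inverts (SClass L).Q_inverts
      (L.factors_of_compClosure h))
  map_id P := by
    show (SClass L).Q.map (𝟙 P.obj.as) = 𝟙 _
    exact (SClass L).Q.map_id _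
  map_comp {P P' P''} φ ψ := by
    rcases φ with ⟨φ⟩
    rcases ψ with ⟨ψ⟩
    induction φ using Quot.ind with | _ f => ?_
    induction ψ using Quot.ind with | _ g => ?_
    show (SClass L).Q.map (f ≫ g) = (SClass L).Q.map f ≫ (SClass L).Q.map g
    exact (SClass L).Q.map_comp _ _

lemma Psi_map_quot {P P' : ObjectProperty.FullSubcategory (fun A : StableCat X => A.as ∈ C ∩ D)}
    (f : P.obj.as ⟶ P'.obj.as) :
    L.Psi.map (ObjectProperty.homMk ((stableQuot X).map f)) = (SClass L).Q.map f := rfl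

end LocalizationTriple

end Main
section Main2

set_option linter.unusedSectionVars false

variable {C X D : Set 𝒜}

namespace LocalizationTriple

variable (L : LocalizationTriple C X D)

/-- The comparison functor from the constructed localization. -/
noncomputable def Phi :
    (SClass L).Localization ⥤ ObjectProperty.FullSubcategory (fun A : StableCat X => A.as ∈ C ∩ D) :=
  CategoryTheory.Localization.Construction.lift L.Ffun L.Ffun_inverts

lemma Phi_fac : (SClass L).Q ⋙ L.Phi = L.Ffun :=
  CategoryTheory.Localization.Construction.fac _ _

lemma Phi_map_Q {A B : 𝒜} (f : A ⟶ B) :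
    L.Phi.map ((SClass L).Q.map f) = L.Ffun.map f := by
  have h := Functor.congr_hom L.Phi_fac f
  exact h.trans ((Category.id_comp _).trans (Category.comp_id _))

/-- The natural isomorphism `Q ≅ Ffun ⋙ Psi` given by the zig-zag
`A ← Q(A) → R(Q(A))`. -/
noncomputable def etaCore : (SClass L).Q ≅ L.Ffun ⋙ L.Psi := by
  refine NatIso.ofComponents (fun A => ?_) (fun {A B} f => ?_)
  · haveI h1 : IsIso ((SClass L).Q.map (L.r A)) :=
      (SClass L).Q_inverts _ (L.r_mem_sclass A)
    haveI h2 : IsIso ((SClass L).Q.map (L.j (L.Qobj A))) :=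
      (SClass L).Q_inverts _ (L.j_mem_sclass (L.Qobj_mem A))
    exact (asIso ((SClass L).Q.map (L.r A))).symm ≪≫
      @asIso _ _ _ _ ((SClass L).Q.map (L.j (L.Qobj A))) h2
  · haveI h1A : IsIso ((SClass L).Q.map (L.r A)) :=
      (SClass L).Q_inverts _ (L.r_mem_sclass A)
    haveI h2A : IsIso ((SClass L).Q.map (L.j (L.Qobj A))) :=
      (SClass L).Q_inverts _ (L.j_mem_sclass (L.Qobj_mem A))
    haveI h1B : IsIso ((SClass L).Q.map (L.r B)) :=
      (SClass L).Q_inverts _ (L.r_mem_sclass B)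
    haveI h2B : IsIso ((SClass L).Q.map (L.j (L.Qobj B))) :=
      (SClass L).Q_inverts _ (L.j_mem_sclass (L.Qobj_mem B))
    show (SClass L).Q.map f ≫
        (inv ((SClass L).Q.map (L.r B)) ≫ (SClass L).Q.map (L.j (L.Qobj B))) =
      (inv ((SClass L).Q.map (L.r A)) ≫ (SClass L).Q.map (L.j (L.Qobj A))) ≫
        (SClass L).Q.map (L.RQ f)
    rw [← cancel_epi ((SClass L).Q.map (L.r A))]
    have k1 : (SClass L).Q.map (L.r A) ≫ (SClass L).Q.map f =
        (SClass L).Q.map (L.Qc f) ≫ (SClass L).Q.map (L.r B) := by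
      rw [← (SClass L).Q.map_comp, ← (SClass L).Q.map_comp, L.Qc_spec]
    have k2 : (SClass L).Q.map (L.j (L.Qobj A)) ≫ (SClass L).Q.map (L.RQ f) =
        (SClass L).Q.map (L.Qc f) ≫ (SClass L).Q.map (L.j (L.Qobj B)) := by
      rw [← (SClass L).Q.map_comp, ← (SClass L).Q.map_comp, L.RQ_spec]
    simp only [Category.assoc]
    rw [IsIso.hom_inv_id_assoc, k2, ← Category.assoc, ← Category.assoc, k1]
    simp only [Category.assoc, IsIso.hom_inv_id_assoc]

/-- An isomorphism in the stable category induced by a stable isomorphism. -/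
noncomputable def sisoSt {A B : 𝒜} (f : A ⟶ B) (hf : SIso X f) :
    ((⟨A⟩ : StableCat X) ≅ ⟨B⟩) where
  hom := (stableQuot X).map f
  inv := (stableQuot X).map hf.choose
  hom_inv_id := by
    haveI := stableRel_congruence X L.X_zero L.X_sum
    have : (stableQuot X).map (f ≫ hf.choose) = (stableQuot X).map (𝟙 A) :=
      (Quotient.functor_map_eq_iff (stableRel X) _ _).2 hf.choose_spec.1
    rw [← (stableQuot X).map_comp, this]
    exact (stableQuot X).map_id _
  inv_hom_id := by
    haveI := stableRel_congruence X L.X_zero L.X_sum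
    have : (stableQuot X).map (hf.choose ≫ f) = (stableQuot X).map (𝟙 B) :=
      (Quotient.functor_map_eq_iff (stableRel X) _ _).2 hf.choose_spec.2
    rw [← (stableQuot X).map_comp, this]
    exact (stableQuot X).map_id _

/-- The stable isomorphism `Q(A) → R(Q(A))` for `A ∈ 𝒞 ∩ 𝒟`. -/
noncomputable def jS (P : ObjectProperty.FullSubcategory (fun A : StableCat X => A.as ∈ C ∩ D)) :
    ((⟨L.Qobj P.obj.as⟩ : StableCat X) ≅ ⟨L.Robj (L.Qobj P.obj.as)⟩) :=
  L.sisoSt (L.j (L.Qobj P.obj.as)) (L.siso_j (L.Qobj_mem_of_D _ P.property.2).2)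

/-- The stable isomorphism `Q(A) → A` for `A ∈ 𝒞 ∩ 𝒟`. -/
noncomputable def rS (P : ObjectProperty.FullSubcategory (fun A : StableCat X => A.as ∈ C ∩ D)) :
    ((⟨L.Qobj P.obj.as⟩ : StableCat X) ≅ ⟨P.obj.as⟩) :=
  L.sisoSt (L.r P.obj.as) (L.siso_r P.property.1)

/-- The component of the counit comparison. -/
noncomputable def epsComp (P : ObjectProperty.FullSubcategory (fun A : StableCat X => A.as ∈ C ∩ D)) :
    L.Ffun.obj P.obj.as ≅ P where
  hom := ObjectProperty.homMk ((L.jS P).symm ≪≫ L.rS P).hom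
  inv := ObjectProperty.homMk ((L.jS P).symm ≪≫ L.rS P).inv
  hom_inv_id := by ext1; exact ((L.jS P).symm ≪≫ L.rS P).hom_inv_id
  inv_hom_id := by ext1; exact ((L.jS P).symm ≪≫ L.rS P).inv_hom_id

/-- A morphism of the subcategory of the stable category induced by a morphism of `𝒜`. -/
noncomputable def Tmap (P P' : ObjectProperty.FullSubcategory (fun A : StableCat X => A.as ∈ C ∩ D))
    (f : P.obj.as ⟶ P'.obj.as) : P ⟶ P' := ObjectProperty.homMk ((stableQuot X).map f)

/-- The counit comparison `Psi ⋙ Phi ≅ 𝟭`. -/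
noncomputable def epsCore : L.Psi ⋙ L.Phi ≅ 𝟭 _ := by
  refine NatIso.ofComponents (fun P => L.epsComp P) (fun {P P'} φ => ?_)
  · rcases φ with ⟨φ⟩
    induction φ using Quot.ind with | _ f => ?_
    have hmap : (L.Psi ⋙ L.Phi).map (Tmap P P' f) = L.Ffun.map f := L.Phi_map_Q f
    show (L.Psi ⋙ L.Phi).map (Tmap P P' f) ≫ (L.epsComp P').hom =
      (L.epsComp P).hom ≫ (Tmap P P' f)
    rw [hmap]
    ext1
    show (stableQuot X).map (L.RQ f) ≫ ((L.jS P').symm ≪≫ L.rS P').hom =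
      ((L.jS P).symm ≪≫ L.rS P).hom ≫ (stableQuot X).map f
    have k1 : (L.jS P).hom ≫ (stableQuot X).map (L.RQ f) =
        (stableQuot X).map (L.Qc f) ≫ (L.jS P').hom := by
      show (stableQuot X).map _ ≫ (stableQuot X).map _ =
        (stableQuot X).map _ ≫ (stableQuot X).map _
      rw [← (stableQuot X).map_comp, ← (stableQuot X).map_comp, L.RQ_spec]
    have k2 : (stableQuot X).map (L.Qc f) ≫ (L.rS P').hom =
        (L.rS P).hom ≫ (stableQuot X).map f := by
      show (stableQuot X).map _ ≫ (stableQuot X).map _ =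
        (stableQuot X).map _ ≫ (stableQuot X).map _
      rw [← (stableQuot X).map_comp, ← (stableQuot X).map_comp, L.Qc_spec]
    simp only [Iso.trans_hom, Iso.symm_hom]
    rw [← cancel_epi (L.jS P).hom]
    simp only [Category.assoc]
    rw [Iso.hom_inv_id_assoc]
    rw [← Category.assoc, k1]
    simp only [Category.assoc]
    rw [Iso.hom_inv_id_assoc, k2]

lemma isLocalization : L.Ffun.IsLocalization (SClass L) := by
  haveI : CategoryTheory.Localization.Lifting (SClass L).Q (SClass L) L.Ffun L.Phi :=
    ⟨eqToIso L.Phi_fac⟩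
  have η : 𝟭 (SClass L).Localization ≅ L.Phi ⋙ L.Psi :=
    CategoryTheory.Localization.liftNatIso (SClass L).Q (SClass L) (SClass L).Q
      (L.Ffun ⋙ L.Psi) (𝟭 _) (L.Phi ⋙ L.Psi) L.etaCore
  exact Functor.IsLocalization.of_equivalence_target (SClass L).Q (SClass L) L.Ffun
    (CategoryTheory.Equivalence.mk L.Phi L.Psi η L.epsCore) (eqToIso L.Phi_fac)

end LocalizationTriple

end Main2
theorem localization_exists {C X D : Set 𝒜} (L : LocalizationTriple C X D) :
    ∃ (F : 𝒜 ⥤ ObjectProperty.FullSubcategory (fun A : StableCat X => A.as ∈ C ∩ D))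
      (hobj : ∀ A : 𝒜,
        F.obj A = ⟨⟨L.Robj (L.Qobj A)⟩, L.Robj_mem_of_C _ (L.Qobj_mem A)⟩),
      (∀ (A B : 𝒜) (f : A ⟶ B) (fc : L.Qobj A ⟶ L.Qobj B)
        (f' : L.Robj (L.Qobj A) ⟶ L.Robj (L.Qobj B)),
        fc ≫ L.r B = L.r A ≫ f →
        L.j (L.Qobj A) ≫ f' = fc ≫ L.j (L.Qobj B) →
        (ObjectProperty.ι _).map (F.map f) =
          eqToHom (congrArg (ObjectProperty.ι
              (fun A : StableCat X => A.as ∈ C ∩ D)).obj (hobj A)) ≫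
            (stableQuot X).map f' ≫
          eqToHom (congrArg (ObjectProperty.ι
              (fun A : StableCat X => A.as ∈ C ∩ D)).obj (hobj B)).symm) ∧
      (∀ ⦃A B : 𝒜⦄ (s : A ⟶ B), SClass L s → IsIso (F.map s)) ∧
      F.IsLocalization (SClass L) := by
  haveI := stableRel_congruence X L.X_zero L.X_sum
  refine ⟨L.Ffun, fun _ => rfl, ?_, ?_, L.isLocalization⟩
  · intro A B f fc f' hfc hf'
    show (stableQuot X).map (L.RQ f) = 𝟙 _ ≫ (stableQuot X).map f' ≫ 𝟙 _
    rw [Category.id_comp, Category.comp_id]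
    exact (Quotient.functor_map_eq_iff (stableRel X) _ _).2
      (L.factors_RQ_sub_of_lift hfc hf')
  · exact fun A B s hs => L.isIso_Ffun_map hs

end LiHomotopy
end

section
/- Let 𝒜 be an abelian category and (𝒞,𝒲,ℱ) a Hovey triple in 𝒜. Set 𝒳 = 𝒞 ∩ 𝒲 ∩ ℱ. Then (𝒞,𝒳,ℱ) is a localization triple in 𝒜. More precisely: for each object A choose (using completeness of the cotorsion pairs) short exact sequences 0 → W_A →^{ω_A} Q(A) →^{r_A} A → 0 with Q(A) ∈ 𝒞 and W_A ∈ 𝒲 ∩ ℱ, and 0 → A →^{j^A} R(A) →^{τ^A} W^A → 0 with R(A) ∈ ℱ and W^A ∈ 𝒞 ∩ 𝒲; then r_A is a 𝒞-precover of A, ω_A is a weak kernel of r_A, every morphism from an object of 𝒞 to W_A factors through an object of 𝒳; j^A is an ℱ-preenvelope of A, τ^A is a weak cokernel of j^A, every morphism from W^A to an object of ℱ factors through an object of 𝒳; and Q(A) ∈ 𝒞 ∩ ℱ whenever A ∈ ℱ, while R(A) ∈ 𝒞 ∩ ℱ whenever A ∈ 𝒞. -/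
/-!
The two approximation sequences do all the work. `Ext¹(𝒞, 𝒲 ∩ ℱ) = 0` lets every map from
an object of `𝒞` lift along `r_A`, and `Ext¹(𝒞 ∩ 𝒲, ℱ) = 0` lets every map into `ℱ` extend
along `j^A`. A map from `C ∈ 𝒞` to a trivially fibrant `M ∈ 𝒲 ∩ ℱ` lifts along a special
`𝒞`-precover `0 → K → P → M → 0`; thickness of `𝒲` puts `P` in `𝒲`, and `ℱ`, being the right
half of a cotorsion pair, is closed under extensions, so `P ∈ 𝒞 ∩ 𝒲 ∩ ℱ`. The dual argument
handles maps out of a trivially cofibrant object, and closure of `𝒞` and `ℱ` under extensions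
gives the last two claims.

Lifting a map along a short exact sequence amounts to splitting its pullback. For closure
under extensions, given `0 → Y₁ → E → Y₂ → 0` and an extension `0 → E → G → A → 0`, first
extend `E → Y₂` to `e : G → Y₂`; then `G → Y₂ ⊞ A` has kernel `Y₁`, and a section of `G → A`
is a lift of the inclusion `A → Y₂ ⊞ A`. The dual statements follow by passing to `𝒜ᵒᵖ`.
-/

open CategoryTheory CategoryTheory.Limits

universe v u

namespace LiHovey

variable {𝒜 : Type u} [Category.{v} 𝒜] [Abelian 𝒜]

/-- `f` factors through an object belonging to `X`. -/
def FactorsThruSet (X : Set 𝒜) {A B : 𝒜} (f : A ⟶ B) : Prop :=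
  ∃ (M : 𝒜) (_ : M ∈ X) (u : A ⟶ M) (v : M ⟶ B), f = u ≫ v

/-- `Ext¹(A, B) = 0`, expressed by the splitting of every short exact sequence
`0 → B → E → A → 0`. -/
def Ext1Zero (A B : 𝒜) : Prop :=
  ∀ (E : 𝒜) (i : B ⟶ E) (p : E ⟶ A) (w : i ≫ p = 0),
    (ShortComplex.mk i p w).ShortExact → ∃ s : A ⟶ E, s ≫ p = 𝟙 A

/-- `(C, Y)` is a cotorsion pair. -/
def IsCotorsionPair (C Y : Set 𝒜) : Prop :=
  (∀ A : 𝒜, A ∈ C ↔ ∀ B ∈ Y, Ext1Zero A B) ∧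
  (∀ B : 𝒜, B ∈ Y ↔ ∀ A ∈ C, Ext1Zero A B)

/-- The cotorsion pair `(C, Y)` is complete: it has enough projectives and
enough injectives. -/
def IsCompleteCotorsionPair (C Y : Set 𝒜) : Prop :=
  IsCotorsionPair C Y ∧
  (∀ A : 𝒜, ∃ (Y₀ C₀ : 𝒜) (i : Y₀ ⟶ C₀) (p : C₀ ⟶ A) (w : i ≫ p = 0),
    (ShortComplex.mk i p w).ShortExact ∧ C₀ ∈ C ∧ Y₀ ∈ Y) ∧
  (∀ A : 𝒜, ∃ (Y₁ C₁ : 𝒜) (i : A ⟶ Y₁) (p : Y₁ ⟶ C₁) (w : i ≫ p = 0),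
    (ShortComplex.mk i p w).ShortExact ∧ C₁ ∈ C ∧ Y₁ ∈ Y)

/-- `W` is a thick class of objects: closed under direct summands and the
two-out-of-three property for short exact sequences. -/
def IsThick (W : Set 𝒜) : Prop :=
  (∀ (A M : 𝒜) (i : A ⟶ M) (p : M ⟶ A), i ≫ p = 𝟙 A → M ∈ W → A ∈ W) ∧
  (∀ (S : ShortComplex 𝒜), S.ShortExact →
    ((S.X₁ ∈ W → S.X₂ ∈ W → S.X₃ ∈ W) ∧
     (S.X₁ ∈ W → S.X₃ ∈ W → S.X₂ ∈ W) ∧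
     (S.X₂ ∈ W → S.X₃ ∈ W → S.X₁ ∈ W)))

/-- `(C, W, F)` is a Hovey triple. -/
def IsHoveyTriple (C W F : Set 𝒜) : Prop :=
  IsThick W ∧ IsCompleteCotorsionPair C (W ∩ F) ∧ IsCompleteCotorsionPair (C ∩ W) F

open Opposite

lemma ext1Zero_iff_exists_retraction {A B : 𝒜} :
    Ext1Zero A B ↔ ∀ (E : 𝒜) (i : B ⟶ E) (p : E ⟶ A) (w : i ≫ p = 0),
      (ShortComplex.mk i p w).ShortExact → ∃ r : E ⟶ B, i ≫ r = 𝟙 B := by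
  refine forall₄_congr fun E i p w => imp_congr_right fun hS => ⟨?_, ?_⟩
  · rintro ⟨s, hs⟩
    exact ⟨_, (ShortComplex.Splitting.ofExactOfSection _ hS.exact s hs hS.mono_f).f_r⟩
  · rintro ⟨r, hr⟩
    exact ⟨_, (ShortComplex.Splitting.ofExactOfRetraction _ hS.exact r hr hS.epi_g).s_g⟩

lemma ext1Zero_op_iff {A B : 𝒜} : Ext1Zero (op B) (op A) ↔ Ext1Zero A B := by
  rw [ext1Zero_iff_exists_retraction]
  constructor
  · intro h E i p w hS
    obtain ⟨s, hs⟩ := h (op E) p.op i.op _ hS.op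
    exact ⟨s.unop, by simpa using congrArg Quiver.Hom.unop hs⟩
  · intro h E i p w hS
    obtain ⟨s, hs⟩ := h (unop E) p.unop i.unop _ hS.unop
    exact ⟨s.op, by simpa using congrArg Quiver.Hom.op hs⟩

lemma shortExact_pullback {S : ShortComplex 𝒜} (hS : S.ShortExact) {X : 𝒜} (f : X ⟶ S.X₃) :
    (ShortComplex.mk (pullback.lift S.f 0 (by simp)) (pullback.snd S.g f)
      (pullback.lift_snd _ _ _)).ShortExact := by
  have := hS.mono_f
  have := hS.epi_g
  have : Mono (pullback.lift S.f 0 (by simp) : S.X₁ ⟶ pullback S.g f) :=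
    mono_of_mono_fac (pullback.lift_fst _ _ _)
  refine .mk' (ShortComplex.exact_of_f_is_kernel _ ?_) inferInstance inferInstance
  refine KernelFork.IsLimit.ofι' _ _ fun {T} t ht => ?_
  have htf : (t ≫ pullback.fst S.g f) ≫ S.g = 0 := by
    simp [pullback.condition, reassoc_of% ht]
  refine ⟨hS.exact.lift _ htf, pullback.hom_ext ?_ ?_⟩
  · rw [Category.assoc, pullback.lift_fst, hS.exact.lift_f]
  · rw [Category.assoc, pullback.lift_snd, comp_zero, ht]

lemma exists_lift_of_ext1Zero {S : ShortComplex 𝒜} (hS : S.ShortExact) {X : 𝒜}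
    (hX : Ext1Zero X S.X₁) (f : X ⟶ S.X₃) : ∃ h : X ⟶ S.X₂, h ≫ S.g = f := by
  obtain ⟨s, hs⟩ := hX _ _ _ _ (shortExact_pullback hS f)
  exact ⟨s ≫ pullback.fst S.g f, by simp [pullback.condition, reassoc_of% hs]⟩

lemma exists_extension_of_ext1Zero {S : ShortComplex 𝒜} (hS : S.ShortExact) {Y : 𝒜}
    (hY : Ext1Zero S.X₃ Y) (g : S.X₁ ⟶ Y) : ∃ h : S.X₂ ⟶ Y, S.f ≫ h = g := by
  obtain ⟨h, hh⟩ := exists_lift_of_ext1Zero hS.op (ext1Zero_op_iff.mpr hY) g.op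
  exact ⟨h.unop, Quiver.Hom.op_inj hh⟩

lemma shortExact_comp_biprodLift {S : ShortComplex 𝒜} (hS : S.ShortExact) {G A : 𝒜}
    {i : S.X₂ ⟶ G} {p : G ⟶ A} {w : i ≫ p = 0} (hT : (ShortComplex.mk i p w).ShortExact)
    {e : G ⟶ S.X₃} (he : i ≫ e = S.g) :
    (ShortComplex.mk (S.f ≫ i) (biprod.lift e p) (by ext <;> simp [he, w])).ShortExact := by
  have := hS.mono_f
  have := hS.epi_g
  have := hT.mono_f
  have := hT.epi_g
  have hepi : Epi (biprod.lift e p) := by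
    rw [epi_iff_surjective_up_to_refinements]
    intro T y
    obtain ⟨T₁, π₁, _, g, hg⟩ := surjective_up_to_refinements_of_epi p (y ≫ biprod.snd)
    obtain ⟨T₂, π₂, _, x, hx⟩ :=
      surjective_up_to_refinements_of_epi S.g (π₁ ≫ y ≫ biprod.fst - g ≫ e)
    refine ⟨T₂, π₂ ≫ π₁, inferInstance, π₂ ≫ g + x ≫ i, ?_⟩
    ext
    · simp only [Category.assoc, biprod.lift_fst, Preadditive.add_comp, he, ← hx,
        Preadditive.comp_sub]
      abel
    · simp [w, hg]
  refine .mk' (ShortComplex.exact_of_f_is_kernel _ ?_) inferInstance hepi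
  refine KernelFork.IsLimit.ofι' _ _ fun {T} t ht => ?_
  have htp : t ≫ p = 0 := by simpa using ht =≫ biprod.snd
  have hte : t ≫ e = 0 := by simpa using ht =≫ biprod.fst
  have hu := hT.exact.lift_f t htp
  refine ⟨hS.exact.lift (hT.exact.lift t htp) ?_, ?_⟩
  · rw [← he, reassoc_of% hu, hte]
  · simp [hu]

lemma ext1Zero_of_shortExact_right {S : ShortComplex 𝒜} (hS : S.ShortExact) {A : 𝒜}
    (h₁ : Ext1Zero A S.X₁) (h₃ : Ext1Zero A S.X₃) : Ext1Zero A S.X₂ := by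
  intro G i p w hT
  obtain ⟨e, he⟩ := exists_extension_of_ext1Zero hT h₃ S.g
  obtain ⟨s, hs⟩ := exists_lift_of_ext1Zero (shortExact_comp_biprodLift hS hT he) h₁ biprod.inr
  exact ⟨s, by simpa using hs =≫ biprod.snd⟩

lemma ext1Zero_of_shortExact_left {S : ShortComplex 𝒜} (hS : S.ShortExact) {Y : 𝒜}
    (h₁ : Ext1Zero S.X₁ Y) (h₃ : Ext1Zero S.X₃ Y) : Ext1Zero S.X₂ Y :=
  ext1Zero_op_iff.mp <|
    ext1Zero_of_shortExact_right hS.op (ext1Zero_op_iff.mpr h₃) (ext1Zero_op_iff.mpr h₁)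

namespace IsCotorsionPair

variable {C Y : Set 𝒜}

lemma ext1Zero (h : IsCotorsionPair C Y) {A B : 𝒜} (hA : A ∈ C) (hB : B ∈ Y) : Ext1Zero A B :=
  (h.1 A).mp hA B hB

lemma mem_left_of_shortExact (h : IsCotorsionPair C Y) {S : ShortComplex 𝒜} (hS : S.ShortExact)
    (h₁ : S.X₁ ∈ C) (h₃ : S.X₃ ∈ C) : S.X₂ ∈ C :=
  (h.1 _).mpr fun _ hB => ext1Zero_of_shortExact_left hS (h.ext1Zero h₁ hB) (h.ext1Zero h₃ hB)

lemma mem_right_of_shortExact (h : IsCotorsionPair C Y) {S : ShortComplex 𝒜} (hS : S.ShortExact)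
    (h₁ : S.X₁ ∈ Y) (h₃ : S.X₃ ∈ Y) : S.X₂ ∈ Y :=
  (h.2 _).mpr fun _ hA => ext1Zero_of_shortExact_right hS (h.ext1Zero hA h₁) (h.ext1Zero hA h₃)

end IsCotorsionPair

namespace IsHoveyTriple

variable {C W F : Set 𝒜}

lemma factorsThruSet_of_trivFibrant (hH : IsHoveyTriple C W F) {X M : 𝒜} (hX : X ∈ C)
    (hM : M ∈ W ∩ F) (g : X ⟶ M) : FactorsThruSet (C ∩ W ∩ F) g := by
  obtain ⟨hW, ⟨hcot, hcot_proj, -⟩, ⟨hcot', -, -⟩⟩ := hH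
  obtain ⟨K, P, _, p, _, hS, hP, hK⟩ := hcot_proj M
  obtain ⟨h, hh⟩ := exists_lift_of_ext1Zero hS (hcot.ext1Zero hX hK) g
  have hPW : P ∈ W := (hW.2 _ hS).2.1 hK.1 hM.1
  have hPF : P ∈ F := hcot'.mem_right_of_shortExact hS hK.2 hM.2
  exact ⟨P, ⟨⟨hP, hPW⟩, hPF⟩, h, p, hh.symm⟩

lemma factorsThruSet_of_trivCofibrant (hH : IsHoveyTriple C W F) {M Y : 𝒜} (hM : M ∈ C ∩ W)
    (hY : Y ∈ F) (g : M ⟶ Y) : FactorsThruSet (C ∩ W ∩ F) g := by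
  obtain ⟨hW, ⟨hcot, -, -⟩, ⟨hcot', -, hcot'_inj⟩⟩ := hH
  obtain ⟨I, K, i, _, _, hS, hK, hI⟩ := hcot'_inj M
  obtain ⟨h, hh⟩ := exists_extension_of_ext1Zero hS (hcot'.ext1Zero hK hY) g
  have hIW : I ∈ W := (hW.2 _ hS).2.1 hM.2 hK.2
  have hIC : I ∈ C := hcot.mem_left_of_shortExact hS hM.1 hK.1
  exact ⟨I, ⟨⟨hIC, hIW⟩, hI⟩, i, h, hh.symm⟩

end IsHoveyTriple

/-- A Hovey triple `(C, W, F)` gives rise to a localization triple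
`(C, C ∩ W ∩ F, F)`. -/
theorem hoveyTriple_gives_localizationTriple {C W F : Set 𝒜}
    (hH : IsHoveyTriple C W F)
    (Qobj Wl : 𝒜 → 𝒜) (ω : ∀ A : 𝒜, Wl A ⟶ Qobj A) (r : ∀ A : 𝒜, Qobj A ⟶ A)
    (hw : ∀ A : 𝒜, ω A ≫ r A = 0)
    (hse : ∀ A : 𝒜, (ShortComplex.mk (ω A) (r A) (hw A)).ShortExact)
    (hQC : ∀ A : 𝒜, Qobj A ∈ C) (hWl : ∀ A : 𝒜, Wl A ∈ W ∩ F)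
    (Robj Wr : 𝒜 → 𝒜) (j : ∀ A : 𝒜, A ⟶ Robj A) (τ : ∀ A : 𝒜, Robj A ⟶ Wr A)
    (hw' : ∀ A : 𝒜, j A ≫ τ A = 0)
    (hse' : ∀ A : 𝒜, (ShortComplex.mk (j A) (τ A) (hw' A)).ShortExact)
    (hRF : ∀ A : 𝒜, Robj A ∈ F) (hWr : ∀ A : 𝒜, Wr A ∈ C ∩ W) :
    (∀ (A C' : 𝒜), C' ∈ C → ∀ g : C' ⟶ A, ∃ h : C' ⟶ Qobj A, h ≫ r A = g) ∧
    (∀ (A T : 𝒜) (g : T ⟶ Qobj A), g ≫ r A = 0 → ∃ h : T ⟶ Wl A, h ≫ ω A = g) ∧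
    (∀ (A C' : 𝒜), C' ∈ C → ∀ g : C' ⟶ Wl A, FactorsThruSet (C ∩ W ∩ F) g) ∧
    (∀ (A F' : 𝒜), F' ∈ F → ∀ g : A ⟶ F', ∃ h : Robj A ⟶ F', j A ≫ h = g) ∧
    (∀ (A T : 𝒜) (g : Robj A ⟶ T), j A ≫ g = 0 → ∃ h : Wr A ⟶ T, τ A ≫ h = g) ∧
    (∀ (A F' : 𝒜), F' ∈ F → ∀ g : Wr A ⟶ F', FactorsThruSet (C ∩ W ∩ F) g) ∧
    (∀ A : 𝒜, A ∈ F → Qobj A ∈ C ∩ F) ∧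
    (∀ A : 𝒜, A ∈ C → Robj A ∈ C ∩ F) := by
  have hcot : IsCotorsionPair C (W ∩ F) := hH.2.1.1
  have hcot' : IsCotorsionPair (C ∩ W) F := hH.2.2.1
  refine ⟨fun A _ hC' g => exists_lift_of_ext1Zero (hse A) (hcot.ext1Zero hC' (hWl A)) g,
    fun A _ g hg => ⟨_, (KernelFork.IsLimit.lift' (hse A).fIsKernel g hg).2⟩,
    fun A _ hC' g => hH.factorsThruSet_of_trivFibrant hC' (hWl A) g,
    fun A _ hF' g => exists_extension_of_ext1Zero (hse' A) (hcot'.ext1Zero (hWr A) hF') g,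
    fun A _ g hg => ⟨_, (CokernelCofork.IsColimit.desc' (hse' A).gIsCokernel g hg).2⟩,
    fun A _ hF' g => hH.factorsThruSet_of_trivCofibrant (hWr A) hF' g,
    fun A hA => ⟨hQC A, hcot'.mem_right_of_shortExact (hse A) (hWl A).2 hA⟩,
    fun A hA => ⟨hcot.mem_left_of_shortExact (hse' A) hA (hWr A).1, hRF A⟩⟩

end LiHovey
end

section
/- Let 𝒯 be an additive category equipped with a right triangulated structure (Ψ,Δ) and a left triangulated structure (Φ,∇) such that (Ψ,Φ) is an adjoint pair with unit η and counit ε. Then (𝒯,Ψ,Φ,Δ,∇) is a pre-triangulated category (i.e. satisfies conditions (b) and (c)) if and only if the following two conditions hold: (b′) for every right triangle Φ(N) →^{u} L →^{v′} M′ →^{w′} Ψ(Φ(N)) in Δ and every left triangle Φ(N) →^{u} L →^{v} M →^{w} N in ∇ with the same first morphism u, there exists γ: M′ → M with γ ∘ v′ = v and w ∘ γ = ε_N ∘ w′; (c′) for every right triangle A →^{f} B →^{g} C →^{h} Ψ(A) in Δ and every left triangle Φ(Ψ(A)) →^{f′} B′ →^{g′} C →^{h} Ψ(A) in ∇ with the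 same last morphism h, there exists γ: B → B′ with γ ∘ f = f′ ∘ η_A and g′ ∘ γ = g. -/
open CategoryTheory CategoryTheory.Limits

universe v u

namespace LiPretriangulated

variable {𝒯 : Type u} [Category.{v} 𝒯] [Preadditive 𝒯] [HasZeroObject 𝒯]

/-- A right `Ψ`-sequence `A → B → C → Ψ(A)`. -/
structure RightTriangle (Ψ : 𝒯 ⥤ 𝒯) where
  obj₁ : 𝒯
  obj₂ : 𝒯
  obj₃ : 𝒯
  f : obj₁ ⟶ obj₂
  g : obj₂ ⟶ obj₃
  h : obj₃ ⟶ Ψ.obj obj₁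

/-- A left `Φ`-sequence `Φ(N) → L → M → N`. -/
structure LeftTriangle (Φ : 𝒯 ⥤ 𝒯) where
  obj₁ : 𝒯
  obj₂ : 𝒯
  obj₃ : 𝒯
  u : Φ.obj obj₃ ⟶ obj₁
  v : obj₁ ⟶ obj₂
  w : obj₂ ⟶ obj₃

open ZeroObject in
/-- A right triangulated structure `(Ψ, Δ)` on `𝒯`: a class of right triangles,
closed under isomorphisms, satisfying the axioms (RT1)–(RT4). -/
structure RightTriangulatedStruct (Ψ : 𝒯 ⥤ 𝒯) where
  dist : Set (RightTriangle Ψ)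
  iso_closed : ∀ (T T' : RightTriangle Ψ), T ∈ dist →
    ∀ (α : T.obj₁ ≅ T'.obj₁) (β : T.obj₂ ≅ T'.obj₂) (γ : T.obj₃ ≅ T'.obj₃),
      T.f ≫ β.hom = α.hom ≫ T'.f → T.g ≫ γ.hom = β.hom ≫ T'.g →
      T.h ≫ Ψ.map α.hom = γ.hom ≫ T'.h → T' ∈ dist
  rt1a : ∀ {A B : 𝒯} (f : A ⟶ B), ∃ (Z : 𝒯) (g : B ⟶ Z) (h : Z ⟶ Ψ.obj A),
    (⟨A, B, Z, f, g, h⟩ : RightTriangle Ψ) ∈ dist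
  rt1b : ∀ A : 𝒯, (⟨0, A, A, 0, 𝟙 A, 0⟩ : RightTriangle Ψ) ∈ dist
  rt2 : ∀ T : RightTriangle Ψ, T ∈ dist →
    (⟨T.obj₂, T.obj₃, Ψ.obj T.obj₁, T.g, T.h, -Ψ.map T.f⟩ : RightTriangle Ψ) ∈ dist
  rt3 : ∀ (T T' : RightTriangle Ψ), T ∈ dist → T' ∈ dist →
    ∀ (α : T.obj₁ ⟶ T'.obj₁) (β : T.obj₂ ⟶ T'.obj₂), T.f ≫ β = α ≫ T'.f →
      ∃ γ : T.obj₃ ⟶ T'.obj₃, T.g ≫ γ = β ≫ T'.g ∧ T.h ≫ Ψ.map α = γ ≫ T'.h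
  rt4 : ∀ {A B Z C' A' B' : 𝒯} (f : A ⟶ B) (g : B ⟶ Z)
    (l : B ⟶ C') (m : C' ⟶ Ψ.obj A) (h : Z ⟶ A') (j : A' ⟶ Ψ.obj B)
    (u : Z ⟶ B') (v : B' ⟶ Ψ.obj A),
    (⟨A, B, C', f, l, m⟩ : RightTriangle Ψ) ∈ dist →
    (⟨B, Z, A', g, h, j⟩ : RightTriangle Ψ) ∈ dist →
    (⟨A, Z, B', f ≫ g, u, v⟩ : RightTriangle Ψ) ∈ dist →
    ∃ (r : C' ⟶ B') (s : B' ⟶ A'),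
      l ≫ r = g ≫ u ∧ r ≫ v = m ∧ u ≫ s = h ∧ s ≫ j = v ≫ Ψ.map f ∧
      (⟨C', B', A', r, s, j ≫ Ψ.map l⟩ : RightTriangle Ψ) ∈ dist

open ZeroObject in
/-- A left triangulated structure `(Φ, ∇)` on `𝒯`: a class of left triangles,
closed under isomorphisms, satisfying the duals (LT1)–(LT4) of (RT1)–(RT4). -/
structure LeftTriangulatedStruct (Φ : 𝒯 ⥤ 𝒯) where
  dist : Set (LeftTriangle Φ)
  iso_closed : ∀ (T T' : LeftTriangle Φ), T ∈ dist →
    ∀ (α : T.obj₁ ≅ T'.obj₁) (β : T.obj₂ ≅ T'.obj₂) (γ : T.obj₃ ≅ T'.obj₃),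
      T.u ≫ α.hom = Φ.map γ.hom ≫ T'.u → T.v ≫ β.hom = α.hom ≫ T'.v →
      T.w ≫ γ.hom = β.hom ≫ T'.w → T' ∈ dist
  lt1a : ∀ {M N : 𝒯} (w : M ⟶ N), ∃ (L : 𝒯) (u : Φ.obj N ⟶ L) (v : L ⟶ M),
    (⟨L, M, N, u, v, w⟩ : LeftTriangle Φ) ∈ dist
  lt1b : ∀ A : 𝒯, (⟨A, A, 0, 0, 𝟙 A, 0⟩ : LeftTriangle Φ) ∈ dist
  lt2 : ∀ T : LeftTriangle Φ, T ∈ dist →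
    (⟨Φ.obj T.obj₃, T.obj₁, T.obj₂, -Φ.map T.w, T.u, T.v⟩ : LeftTriangle Φ) ∈ dist
  lt3 : ∀ (T T' : LeftTriangle Φ), T ∈ dist → T' ∈ dist →
    ∀ (β : T.obj₂ ⟶ T'.obj₂) (γ : T.obj₃ ⟶ T'.obj₃), T.w ≫ γ = β ≫ T'.w →
      ∃ α : T.obj₁ ⟶ T'.obj₁, T.v ≫ β = α ≫ T'.v ∧ T.u ≫ α = Φ.map γ ≫ T'.u
  lt4 : ∀ {P M N L₁ L₂ L₃ : 𝒯} (y : P ⟶ M) (w : M ⟶ N)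
    (u₁ : Φ.obj N ⟶ L₁) (v₁ : L₁ ⟶ M) (u₂ : Φ.obj M ⟶ L₂) (v₂ : L₂ ⟶ P)
    (u₃ : Φ.obj N ⟶ L₃) (v₃ : L₃ ⟶ P),
    (⟨L₁, M, N, u₁, v₁, w⟩ : LeftTriangle Φ) ∈ dist →
    (⟨L₂, P, M, u₂, v₂, y⟩ : LeftTriangle Φ) ∈ dist →
    (⟨L₃, P, N, u₃, v₃, y ≫ w⟩ : LeftTriangle Φ) ∈ dist →
    ∃ (r : L₃ ⟶ L₁) (s : L₂ ⟶ L₃),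
      r ≫ v₁ = v₃ ≫ y ∧ u₃ ≫ r = u₁ ∧ s ≫ v₃ = v₂ ∧ u₂ ≫ s = Φ.map w ≫ u₃ ∧
      (⟨L₂, L₃, L₁, Φ.map v₁ ≫ u₂, s, r⟩ : LeftTriangle Φ) ∈ dist

section Conditions

variable {Ψ Φ : 𝒯 ⥤ 𝒯}

/-- Condition (b) of a pre-triangulated category. -/
def CondB (RT : RightTriangulatedStruct Ψ) (LT : LeftTriangulatedStruct Φ)
    (adj : Ψ ⊣ Φ) : Prop :=
  ∀ (T : RightTriangle Ψ), T ∈ RT.dist → ∀ (S : LeftTriangle Φ), S ∈ LT.dist →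
    ∀ (α : T.obj₁ ⟶ Φ.obj S.obj₃) (β : T.obj₂ ⟶ S.obj₁),
      T.f ≫ β = α ≫ S.u →
      ∃ γ : T.obj₃ ⟶ S.obj₂,
        T.g ≫ γ = β ≫ S.v ∧
        γ ≫ S.w = T.h ≫ Ψ.map α ≫ adj.counit.app S.obj₃

/-- Condition (c) of a pre-triangulated category. -/
def CondC (RT : RightTriangulatedStruct Ψ) (LT : LeftTriangulatedStruct Φ)
    (adj : Ψ ⊣ Φ) : Prop :=
  ∀ (T : RightTriangle Ψ), T ∈ RT.dist → ∀ (S : LeftTriangle Φ), S ∈ LT.dist →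
    ∀ (α : Ψ.obj T.obj₁ ⟶ S.obj₃) (β : T.obj₃ ⟶ S.obj₂),
      T.h ≫ α = β ≫ S.w →
      ∃ γ : T.obj₂ ⟶ S.obj₁,
        T.f ≫ γ = (adj.unit.app T.obj₁ ≫ Φ.map α) ≫ S.u ∧
        γ ≫ S.v = T.g ≫ β

/-- Condition (b′). -/
def CondB' (RT : RightTriangulatedStruct Ψ) (LT : LeftTriangulatedStruct Φ)
    (adj : Ψ ⊣ Φ) : Prop :=
  ∀ (S : LeftTriangle Φ), S ∈ LT.dist →
    ∀ (M' : 𝒯) (v' : S.obj₁ ⟶ M') (w' : M' ⟶ Ψ.obj (Φ.obj S.obj₃)),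
      (⟨Φ.obj S.obj₃, S.obj₁, M', S.u, v', w'⟩ : RightTriangle Ψ) ∈ RT.dist →
      ∃ γ : M' ⟶ S.obj₂, v' ≫ γ = S.v ∧ γ ≫ S.w = w' ≫ adj.counit.app S.obj₃

/-- Condition (c′). -/
def CondC' (RT : RightTriangulatedStruct Ψ) (LT : LeftTriangulatedStruct Φ)
    (adj : Ψ ⊣ Φ) : Prop :=
  ∀ (T : RightTriangle Ψ), T ∈ RT.dist →
    ∀ (B' : 𝒯) (f' : Φ.obj (Ψ.obj T.obj₁) ⟶ B') (g' : B' ⟶ T.obj₃),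
      (⟨B', T.obj₃, Ψ.obj T.obj₁, f', g', T.h⟩ : LeftTriangle Φ) ∈ LT.dist →
      ∃ γ : T.obj₂ ⟶ B', T.f ≫ γ = adj.unit.app T.obj₁ ≫ f' ∧ γ ≫ g' = T.g

end Conditions

/-!
(b′) and (c′) are the instances of (b) and (c) with `α` and `β` identities. Conversely, for (b)
complete `S.u` to a right triangle by (RT1); (RT3) along `α`, `β` maps `T` into it, and composing
with the morphism that (b′) provides for the completed triangle gives `γ`. Dually, (c) follows
from (LT1), (LT3) and (c′) applied to a completion of `T.h` to a left triangle.
-/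

section Reduction

variable {Ψ Φ : 𝒯 ⥤ 𝒯} {RT : RightTriangulatedStruct Ψ} {LT : LeftTriangulatedStruct Φ}
  {adj : Ψ ⊣ Φ}

theorem condB'_of_condB (hb : CondB RT LT adj) : CondB' RT LT adj := by
  intro S hS M' v' w' hT
  obtain ⟨γ, hγv, hγw⟩ := hb _ hT S hS (𝟙 _) (𝟙 _) (by simp)
  exact ⟨γ, by simpa using hγv, by simpa using hγw⟩

theorem condC'_of_condC (hc : CondC RT LT adj) : CondC' RT LT adj := by
  intro T hT B' f' g' hS
  obtain ⟨γ, hγf, hγg⟩ := hc T hT _ hS (𝟙 _) (𝟙 _) (by simp)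
  exact ⟨γ, by simpa using hγf, by simpa using hγg⟩

theorem condB_of_condB' (hb' : CondB' RT LT adj) : CondB RT LT adj := by
  intro T hT S hS α β hαβ
  obtain ⟨M, v, w, hM⟩ := RT.rt1a S.u
  obtain ⟨γ, hγv, hγw⟩ := hb' S hS M v w hM
  obtain ⟨δ, hδg, hδh⟩ := RT.rt3 T _ hT hM α β hαβ
  refine ⟨δ ≫ γ, ?_, ?_⟩
  · rw [reassoc_of% hδg, hγv]
  · rw [Category.assoc, hγw, reassoc_of% hδh]

theorem condC_of_condC' (hc' : CondC' RT LT adj) : CondC RT LT adj := by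
  intro T hT S hS α β hαβ
  obtain ⟨L, u, v, hL⟩ := LT.lt1a T.h
  obtain ⟨γ, hγf, hγg⟩ := hc' T hT L u v hL
  obtain ⟨δ, hδv, hδu⟩ := LT.lt3 _ S hL hS β α hαβ
  refine ⟨γ ≫ δ, ?_, ?_⟩
  · rw [reassoc_of% hγf, hδu, Category.assoc]
  · rw [Category.assoc, ← hδv, reassoc_of% hγg]

end Reduction

theorem pretriangulated_iff_general {Ψ Φ : 𝒯 ⥤ 𝒯}
    (RT : RightTriangulatedStruct Ψ) (LT : LeftTriangulatedStruct Φ)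
    (adj : Ψ ⊣ Φ) :
    (CondB RT LT adj ∧ CondC RT LT adj) ↔ (CondB' RT LT adj ∧ CondC' RT LT adj) :=
  ⟨fun ⟨hb, hc⟩ => ⟨condB'_of_condB hb, condC'_of_condC hc⟩,
    fun ⟨hb', hc'⟩ => ⟨condB_of_condB' hb', condC_of_condC' hc'⟩⟩

/-- Lemma 5.2: `(𝒯, Ψ, Φ, Δ, ∇)` is a pre-triangulated category (conditions (b)
and (c)) if and only if the special cases (b′) and (c′) hold. -/
theorem pretriangulated_iff {Ψ Φ : 𝒯 ⥤ 𝒯} [Ψ.Additive] [Φ.Additive]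
    (RT : RightTriangulatedStruct Ψ) (LT : LeftTriangulatedStruct Φ)
    (adj : Ψ ⊣ Φ) :
    (CondB RT LT adj ∧ CondC RT LT adj) ↔ (CondB' RT LT adj ∧ CondC' RT LT adj) :=
  pretriangulated_iff_general RT LT adj

end LiPretriangulated
end
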